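/- arXiv:math/0508508 — 10 statements merged into one kernel-verified Lean document; each statement's English description precedes it below -/
import Mathlib

section
/- Any finite union W of linear subspaces of a vector space admits a canonical minimal expression: there exists a finite set 𝒳 of linear subspaces with W = ⋃_{V ∈ 𝒳} V such that for any other finite set 𝒴 of linear subspaces with W = ⋃_{V ∈ 𝒴} V, one has 𝒳 ⊆ 𝒴. -/
open Module

lemma aux_le_of_subset_biUnion {H : Type*} [AddCommGroup H] [Module ℝ H]
    {V : Submodule ℝ H} {s : Finset (Submodule ℝ H)}
    (h : (V : Set H) ⊆ ⋃ p ∈ s, (p : Set H)) : ∃ p ∈ s, V ≤ p := by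
  classical
  have hcov : ⋃ q ∈ s.image (fun p => p.comap V.subtype), ((q : Submodule ℝ V) : Set V)
      = Set.univ := by
    ext x
    simp only [Set.mem_iUnion, Set.mem_univ, iff_true, Finset.mem_image, SetLike.mem_coe]
    have hx : (x : H) ∈ ⋃ p ∈ s, (p : Set H) := h x.2
    simp only [Set.mem_iUnion, SetLike.mem_coe] at hx
    obtain ⟨p, hp, hxp⟩ := hx
    exact ⟨p.comap V.subtype, ⟨p, hp, rfl⟩, hxp⟩
  have htop := Subspace.top_mem_of_biUnion_eq_univ hcov
  simp only [Finset.mem_image] at htop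
  obtain ⟨p, hp, hptop⟩ := htop
  exact ⟨p, hp, Submodule.comap_subtype_eq_top.mp hptop⟩

/-- Any finite union of linear subspaces admits a canonical minimal expression
as a union of a finite set of subspaces. -/
theorem stmt0 {H : Type*} [AddCommGroup H] [Module ℝ H] [FiniteDimensional ℝ H]
    (W : Set H) (𝒳₀ : Finset (Submodule ℝ H))
    (hW : W = ⋃ V ∈ 𝒳₀, (V : Set H)) :
    ∃ 𝒳 : Finset (Submodule ℝ H),
      (W = ⋃ V ∈ 𝒳, (V : Set H)) ∧
      ∀ 𝒴 : Finset (Submodule ℝ H), W = ⋃ V ∈ 𝒴, (V : Set H) → 𝒳 ⊆ 𝒴 := by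
  classical
  set 𝒳 : Finset (Submodule ℝ H) :=
    𝒳₀.filter (fun V => ∀ V' ∈ 𝒳₀, V ≤ V' → V = V') with h𝒳
  -- every element of 𝒳₀ is below some element of 𝒳
  have hmax : ∀ V ∈ 𝒳₀, ∃ V' ∈ 𝒳, V ≤ V' := by
    intro V hV
    obtain ⟨V', hle, hmx⟩ := (𝒳₀ : Set (Submodule ℝ H)).toFinite.exists_le_maximal hV
    refine ⟨V', ?_, hle⟩
    rw [h𝒳, Finset.mem_filter]
    exact ⟨hmx.1, fun q hq hle' => le_antisymm hle' (hmx.2 hq hle')⟩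
  have hW' : W = ⋃ V ∈ 𝒳, (V : Set H) := by
    apply Set.Subset.antisymm
    · rw [hW]
      intro x hx
      simp only [Set.mem_iUnion, SetLike.mem_coe] at hx ⊢
      obtain ⟨V, hV, hxV⟩ := hx
      obtain ⟨V', hV', hle⟩ := hmax V hV
      exact ⟨V', hV', hle hxV⟩
    · rw [hW]
      refine Set.iUnion₂_mono' fun V hV => ?_
      exact ⟨V, (Finset.mem_filter.mp hV).1, le_rfl⟩
  refine ⟨𝒳, hW', fun 𝒴 h𝒴 => ?_⟩
  intro V hV
  rw [h𝒳, Finset.mem_filter] at hV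
  obtain ⟨hV₀, hVmax⟩ := hV
  have hVW : (V : Set H) ⊆ ⋃ p ∈ 𝒴, (p : Set H) := by
    rw [← h𝒴, hW]
    exact Set.subset_biUnion_of_mem hV₀
  obtain ⟨p, hp, hVp⟩ := aux_le_of_subset_biUnion hVW
  have hpW : (p : Set H) ⊆ ⋃ q ∈ 𝒳₀, (q : Set H) := by
    rw [← hW, h𝒴]
    exact Set.subset_biUnion_of_mem hp
  obtain ⟨q, hq, hpq⟩ := aux_le_of_subset_biUnion hpW
  have : V = q := hVmax q hq (hVp.trans hpq)
  have : V = p := le_antisymm hVp (this ▸ hpq)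
  rwa [this]
end

section
/- If {V^α : α ∈ A} is an arbitrary family of sets, each of which is a finite union of linear subspaces of a vector space, then the intersection ⋂_{α ∈ A} V^α coincides with the intersection of the V^α over some finite subfamily. -/
/-!
Relativise to a subspace `W` and induct on `W` along the descending chain condition. If some
`V a₀` misses a point of `W`, then `W ∩ V a₀` is covered by the finitely many strictly smaller
subspaces `W ⊓ U`, `U` running over the pieces of `V a₀`; the finite subfamilies found for them,
together with `a₀`, cut out `⋂ a, V a` inside `W`.
-/

section ArtinianModule

variable {R M : Type*} [Ring R] [AddCommGroup M] [Module R M] [IsArtinian R M]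

theorem exists_finset_inter_biInter_subset_iInter {A : Type*} (V : A → Set M)
    (hV : ∀ a, ∃ 𝒳 : Finset (Submodule R M), V a = ⋃ U ∈ 𝒳, (U : Set M))
    (W : Submodule R M) : ∃ s : Finset A, (W : Set M) ∩ ⋂ a ∈ s, V a ⊆ ⋂ a, V a := by
  classical
  induction W using WellFoundedLT.induction with
  | _ W ih =>
  by_cases hW : ∀ a, (W : Set M) ⊆ V a
  · exact ⟨∅, fun x hx => Set.mem_iInter.2 fun a => hW a hx.1⟩
  obtain ⟨a₀, ha₀⟩ := not_forall.1 hW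
  obtain ⟨𝒳, h𝒳⟩ := hV a₀
  have hlt : ∀ U ∈ 𝒳, W ⊓ U < W := fun U hU => inf_lt_left.2 fun hWU =>
    ha₀ <| h𝒳 ▸ (SetLike.coe_subset_coe.2 hWU).trans (Set.subset_biUnion_of_mem hU)
  have hcover : ∀ U, ∃ t : Finset A,
      U ∈ 𝒳 → ((W ⊓ U : Submodule R M) : Set M) ∩ ⋂ a ∈ t, V a ⊆ ⋂ a, V a := fun U =>
    if hU : U ∈ 𝒳 then (ih _ (hlt U hU)).imp fun _ h _ => h else ⟨∅, fun h => absurd h hU⟩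
  choose t ht using hcover
  refine ⟨insert a₀ (𝒳.biUnion t), ?_⟩
  rintro x ⟨hxW, hxs⟩
  simp only [Set.mem_iInter, Finset.mem_insert, Finset.mem_biUnion] at hxs
  have hx₀ := hxs a₀ (Or.inl rfl)
  rw [h𝒳, Set.mem_iUnion₂] at hx₀
  obtain ⟨U, hU, hxU⟩ := hx₀
  exact ht U hU ⟨⟨hxW, hxU⟩, Set.mem_iInter₂.2 fun a ha => hxs a (Or.inr ⟨U, hU, ha⟩)⟩

end ArtinianModule

/-- An arbitrary intersection of finite unions of linear subspaces coincides with
the intersection over some finite subfamily. -/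
theorem stmt1 {H : Type*} [AddCommGroup H] [Module ℝ H] [FiniteDimensional ℝ H]
    {A : Type*} (V : A → Set H)
    (hV : ∀ a : A, ∃ 𝒳 : Finset (Submodule ℝ H), V a = ⋃ U ∈ 𝒳, (U : Set H)) :
    ∃ s : Finset A, (⋂ a : A, V a) = ⋂ a ∈ s, V a := by
  obtain ⟨s, hs⟩ := exists_finset_inter_biInter_subset_iInter V hV ⊤
  refine ⟨s, Set.Subset.antisymm ?_ fun x hx => hs ⟨Submodule.mem_top, hx⟩⟩
  exact Set.subset_iInter₂ fun a _ => Set.iInter_subset V a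
end

section
/- If V is a finite union of linear subspaces of a finite dimensional vector space and x is a linear automorphism of the vector space such that x · V ⊆ V, then x · V = V. -/
/-!
Keep only the maximal members `C` of the finite family of subspaces; their union is still `V`,
and no member of `C` lies in another. Over an infinite field a subspace covered by finitely many
subspaces lies in one of them, so `x` maps each `U ∈ C` into some `W ∈ C`. Going down in
dimension, `x` permutes the members of `C` of dimension `> dim U`; if `x U ⊊ W` then `W` has
larger dimension, hence `W = x U'` with `U ⊊ U'`, against maximality. So `x` permutes `C`, and
therefore `x V = V`.
-/

open Module Set

theorem Set.Finite.biUnion_setOf_maximal_eq {α β : Type*} [Preorder α] {s : Set α}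
    (hs : s.Finite) {f : α → Set β} (hf : Monotone f) :
    ⋃ a ∈ {a | Maximal (· ∈ s) a}, f a = ⋃ a ∈ s, f a := by
  refine Subset.antisymm (biUnion_mono (fun a ha => ha.prop) fun _ _ => subset_rfl) ?_
  refine iUnion₂_subset fun a ha => ?_
  obtain ⟨b, hab, hb⟩ := hs.exists_le_maximal ha
  exact (hf hab).trans (subset_biUnion_of_mem (u := f) hb)

namespace Submodule

variable {K H : Type*} [Field K] [AddCommGroup H] [Module K H]

theorem exists_le_of_coe_subset_biUnion [Infinite K] {s : Set (Submodule K H)} (hs : s.Finite)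
    {W : Submodule K H} (h : (W : Set H) ⊆ ⋃ U ∈ s, (U : Set H)) : ∃ U ∈ s, W ≤ U := by
  have := hs.to_subtype
  obtain ⟨⟨U, hU⟩, hWU⟩ :=
    Subspace.exists_eq_top_of_iUnion_eq_univ (p := fun U : s => U.1.comap W.subtype) <| by
      refine eq_univ_of_forall fun w => ?_
      simpa using h w.2
  exact ⟨U, hU, comap_subtype_eq_top.mp hWU⟩

variable [FiniteDimensional K H]

theorem mapsTo_map_of_isAntichain (e : H ≃ₗ[K] H) {C : Set (Submodule K H)} (hC : C.Finite)
    (hanti : IsAntichain (· ≤ ·) C) (hcover : ∀ U ∈ C, ∃ W ∈ C, U.map (e : H →ₗ[K] H) ≤ W) :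
    MapsTo (map (e : H →ₗ[K] H)) C C := by
  intro U hU
  induction hcodim : finrank K H - finrank K U using Nat.strong_induction_on generalizing U with
  | _ n ih =>
  set C' := {U' ∈ C | finrank K U < finrank K U'}
  have hmaps : MapsTo (map (e : H →ₗ[K] H)) C' C' := fun U' hU' =>
    ⟨ih _ (by have := U'.finrank_le; have := hU'.2; omega) hU'.1 rfl,
      by rw [e.finrank_map_eq]; exact hU'.2⟩
  have hsurj : SurjOn (map (e : H →ₗ[K] H)) C' C' :=
    ((hC.subset (sep_subset _ _)).injOn_iff_bijOn_of_mapsTo hmaps |>.mp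
      (map_injective_of_injective e.injective).injOn).surjOn
  obtain ⟨W, hW, hUW⟩ := hcover U hU
  rcases hUW.eq_or_lt with hUW | hUW
  · rwa [hUW]
  · have hdim : finrank K U < finrank K W := by
      simpa only [e.finrank_map_eq] using finrank_lt_finrank_of_lt hUW
    obtain ⟨U', hU', rfl⟩ := hsurj ⟨hW, hdim⟩
    exact absurd ((map_lt_map_iff_of_injective e.injective).mp hUW) (hanti.not_lt hU hU'.1)

end Submodule

open Submodule

/-- If `V` is a finite union of linear subspaces and `x` is a linear automorphism
with `x · V ⊆ V`, then `x · V = V`. -/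
theorem stmt3 {H : Type*} [AddCommGroup H] [Module ℝ H] [FiniteDimensional ℝ H]
    (V : Set H) (hV : ∃ 𝒳 : Finset (Submodule ℝ H), V = ⋃ U ∈ 𝒳, (U : Set H))
    (x : H ≃ₗ[ℝ] H) (hx : ⇑x '' V ⊆ V) :
    ⇑x '' V = V := by
  obtain ⟨𝒳, rfl⟩ := hV
  set C := {U | Maximal (· ∈ (𝒳 : Set (Submodule ℝ H))) U}
  have hCfin : C.Finite := 𝒳.finite_toSet.subset fun _ hU => hU.prop
  rw [← Finset.set_biUnion_coe, ← 𝒳.finite_toSet.biUnion_setOf_maximal_eq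
    (f := ((↑) : Submodule ℝ H → Set H)) fun _ _ h => h] at hx ⊢
  have hcover : ∀ U ∈ C, ∃ W ∈ C, U.map (x : H →ₗ[ℝ] H) ≤ W := fun U hU =>
    exists_le_of_coe_subset_biUnion hCfin <| by
      rw [map_coe]; exact (image_mono (subset_biUnion_of_mem hU)).trans hx
  have hbij : BijOn (map (x : H →ₗ[ℝ] H)) C C :=
    (hCfin.injOn_iff_bijOn_of_mapsTo <| mapsTo_map_of_isAntichain x hCfin
      (setOfPred_maximal_antichain _) hcover).mp (map_injective_of_injective x.injective).injOn
  calc ⇑x '' ⋃ U ∈ C, (U : Set H) = ⋃ U ∈ map (x : H →ₗ[ℝ] H) '' C, (U : Set H) := by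
        simp only [image_iUnion₂, biUnion_image, map_coe, LinearEquiv.coe_coe]
    _ = ⋃ U ∈ C, (U : Set H) := by rw [hbij.image_eq]
end

section
/- Let (H, ω) be a symplectic vector space of dimension 2g and 1 ≤ k ≤ g. For every subspace E of H of dimension 2g − k, there exists an isotropic k-dimensional subspace F of H with F ∩ E ≠ {0}. In other words, every hyperplane section of the Grassmannian Grass(k,H) intersects the set Iso(k,H) of isotropic k-planes. -/
open Module

private lemma stmt5_step {H : Type*} [AddCommGroup H] [Module ℝ H] [FiniteDimensional ℝ H]
    (g : ℕ) (ω : H →ₗ[ℝ] H →ₗ[ℝ] ℝ)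
    (halt : ∀ u v : H, ω u v = - ω v u)
    (hdim : finrank ℝ H = 2 * g)
    (W : Submodule ℝ H) (hiso : ∀ u ∈ W, ∀ v ∈ W, ω u v = 0)
    (hlt : finrank ℝ W < g) :
    ∃ W' : Submodule ℝ H, W ≤ W' ∧ finrank ℝ W' = finrank ℝ W + 1 ∧
      (∀ u ∈ W', ∀ v ∈ W', ω u v = 0) := by
  set φ : H →ₗ[ℝ] (W →ₗ[ℝ] ℝ) := (ω.domRestrict W).flip with hφ
  have hker : ∀ x : H, x ∈ LinearMap.ker φ ↔ ∀ w ∈ W, ω w x = 0 := by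
    intro x
    constructor
    · intro hx w hw
      have := congrArg (fun f => f ⟨w, hw⟩) (LinearMap.mem_ker.mp hx)
      simpa [hφ] using this
    · intro h
      apply LinearMap.mem_ker.mpr
      ext ⟨w, hw⟩
      simpa [hφ] using h w hw
  -- rank bound
  have hrank : finrank ℝ (LinearMap.range φ) + finrank ℝ (LinearMap.ker φ) = 2 * g := by
    rw [← hdim]; exact LinearMap.finrank_range_add_finrank_ker φ
  have hdual : finrank ℝ (W →ₗ[ℝ] ℝ) = finrank ℝ W := by
    simpa using Subspace.dual_finrank_eq (K := ℝ) (V := W)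
  have hle : finrank ℝ (LinearMap.range φ) ≤ finrank ℝ W := by
    rw [← hdual]; exact Submodule.finrank_le _
  have hkerbig : finrank ℝ W < finrank ℝ (LinearMap.ker φ) := by omega
  have hWker : W ≤ LinearMap.ker φ := by
    intro x hx
    exact (hker x).mpr (fun w hw => hiso w hw x hx)
  have hnot : ¬ (LinearMap.ker φ ≤ W) := by
    intro h
    have h2 := Submodule.finrank_mono (R := ℝ) h
    exact absurd h2 (not_le.mpr hkerbig)
  obtain ⟨u, huker, huW⟩ := SetLike.not_le_iff_exists.mp hnot
  have hu0 : u ≠ 0 := fun h => huW (h ▸ W.zero_mem)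
  have hωWu : ∀ w ∈ W, ω w u = 0 := (hker u).mp huker
  have hωuW : ∀ w ∈ W, ω u w = 0 := fun w hw => by rw [halt]; simp [hωWu w hw]
  have hωuu : ω u u = 0 := by have h3 := halt u u; linarith only [h3]
  refine ⟨W ⊔ (ℝ ∙ u), le_sup_left, ?_, ?_⟩
  · have hinf : W ⊓ (ℝ ∙ u) = ⊥ := by
      rw [eq_bot_iff]
      rintro x ⟨hxW, hxu⟩
      obtain ⟨c, rfl⟩ := Submodule.mem_span_singleton.mp hxu
      rcases eq_or_ne c 0 with rfl | hc
      · simp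
      · refine absurd ?_ huW
        have h2 := W.smul_mem c⁻¹ hxW
        rwa [smul_smul, inv_mul_cancel₀ hc, one_smul] at h2
    have := Submodule.finrank_sup_add_finrank_inf_eq W (ℝ ∙ u)
    rw [hinf, finrank_span_singleton hu0] at this
    simpa using this
  · intro a ha b hb
    obtain ⟨w, hw, x, hx, rfl⟩ := Submodule.mem_sup.mp ha
    obtain ⟨w', hw', y, hy, rfl⟩ := Submodule.mem_sup.mp hb
    obtain ⟨c, rfl⟩ := Submodule.mem_span_singleton.mp hx
    obtain ⟨d, rfl⟩ := Submodule.mem_span_singleton.mp hy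
    simp only [map_add, map_smul, LinearMap.add_apply, LinearMap.smul_apply, smul_eq_mul]
    rw [hiso w hw w' hw', hωWu w hw, hωuW w' hw', hωuu]
    ring

private lemma stmt5_extend {H : Type*} [AddCommGroup H] [Module ℝ H] [FiniteDimensional ℝ H]
    (g : ℕ) (ω : H →ₗ[ℝ] H →ₗ[ℝ] ℝ)
    (halt : ∀ u v : H, ω u v = - ω v u)
    (hdim : finrank ℝ H = 2 * g) :
    ∀ d : ℕ, ∀ W : Submodule ℝ H, (∀ u ∈ W, ∀ v ∈ W, ω u v = 0) →
      finrank ℝ W + d ≤ g →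
      ∃ W' : Submodule ℝ H, W ≤ W' ∧ finrank ℝ W' = finrank ℝ W + d ∧
        (∀ u ∈ W', ∀ v ∈ W', ω u v = 0) := by
  intro d
  induction d with
  | zero => exact fun W hiso _ => ⟨W, le_rfl, by simp, hiso⟩
  | succ d ih =>
    intro W hiso hle
    obtain ⟨W₁, hWW₁, hW₁rk, hW₁iso⟩ := stmt5_step g ω halt hdim W hiso (by omega)
    obtain ⟨W', hW₁W', hW'rk, hW'iso⟩ := ih W₁ hW₁iso (by omega)
    exact ⟨W', hWW₁.trans hW₁W', by omega, hW'iso⟩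

/-- In a symplectic space of dimension `2g`, every hyperplane section of the
Grassmannian of `k`-planes meets the set of isotropic `k`-planes: for every subspace
`E` of dimension `2g - k` there is an isotropic `k`-dimensional subspace `F`
intersecting `E` non-trivially. -/
theorem stmt5 {H : Type*} [AddCommGroup H] [Module ℝ H] [FiniteDimensional ℝ H]
    (g k : ℕ) (hk1 : 1 ≤ k) (hkg : k ≤ g)
    (ω : H →ₗ[ℝ] H →ₗ[ℝ] ℝ)
    (halt : ∀ u v : H, ω u v = - ω v u)
    (hnd : ∀ u : H, (∀ v : H, ω u v = 0) → u = 0)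
    (hdim : finrank ℝ H = 2 * g)
    (E : Submodule ℝ H) (hE : finrank ℝ E = 2 * g - k) :
    ∃ F : Submodule ℝ H, finrank ℝ F = k ∧
      (∀ u ∈ F, ∀ v ∈ F, ω u v = 0) ∧ F ⊓ E ≠ ⊥ := by
  have hEne : E ≠ ⊥ := by
    intro h
    rw [h, finrank_bot] at hE
    omega
  obtain ⟨v, hvE, hv0⟩ := Submodule.exists_mem_ne_zero_of_ne_bot hEne
  have hspan : finrank ℝ (ℝ ∙ v) = 1 := finrank_span_singleton hv0
  have hvv : ω v v = 0 := by have h3 := halt v v; linarith only [h3]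
  have hiso : ∀ u ∈ (ℝ ∙ v), ∀ w ∈ (ℝ ∙ v), ω u w = 0 := by
    intro u hu w hw
    obtain ⟨c, rfl⟩ := Submodule.mem_span_singleton.mp hu
    obtain ⟨d, rfl⟩ := Submodule.mem_span_singleton.mp hw
    simp only [map_smul, LinearMap.smul_apply, smul_eq_mul, hvv]
    ring
  obtain ⟨F, hle, hrk, hFiso⟩ := stmt5_extend g ω halt hdim (k - 1) (ℝ ∙ v) hiso (by omega)
  refine ⟨F, by omega, hFiso, ?_⟩
  rw [Submodule.ne_bot_iff]
  exact ⟨v, ⟨hle (Submodule.mem_span_singleton_self v), hvE⟩, hv0⟩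
end

section
/- Let x_n be a sequence of linear isomorphisms of an inner product space H such that log σ_k(x_n) − log σ_{k+1}(x_n) → ∞, x_n · E⁺_k(x_n) → E^u and E⁻_k(x_n) → E^s as n → ∞. If K is a compact subset of the Grassmannian Grass(k,H) such that every F ∈ K satisfies F ∩ E^s = {0}, then x_n · F converges to E^u uniformly over F ∈ K. -/
open Module Filter

/-- The `k`-th singular value of `x` (1-indexed, decreasing). -/
noncomputable def sVal {H : Type*} [NormedAddCommGroup H] [InnerProductSpace ℝ H]
    (x : H →ₗ[ℝ] H) (k : ℕ) : ℝ :=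
  sSup {r : ℝ | 0 ≤ r ∧ ∃ F : Submodule ℝ H, finrank ℝ F = k ∧ ∀ v ∈ F, r * ‖v‖ ≤ ‖x v‖}

/-- The gap distance between two subspaces. -/
noncomputable def subDist {H : Type*} [NormedAddCommGroup H] [NormedSpace ℝ H]
    (F F' : Submodule ℝ H) : ℝ :=
  Metric.hausdorffDist ((F : Set H) ∩ Metric.closedBall 0 1)
    ((F' : Set H) ∩ Metric.closedBall 0 1)

/-- The metric topology on the set of subspaces of `H`, generated by the balls of the
gap distance. -/
instance grassTop {H : Type*} [NormedAddCommGroup H] [NormedSpace ℝ H] :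
    TopologicalSpace (Submodule ℝ H) :=
  TopologicalSpace.generateFrom
    {U | ∃ (F : Submodule ℝ H) (ε : ℝ), 0 < ε ∧ U = {F' : Submodule ℝ H | subDist F F' < ε}}

/-! By compactness, the planes `F ∈ K` make an angle bounded below with `E^s`; since
`E⁻_k(x_n) → E^s`, they then make an angle bounded below with `E⁻_k(x_n)`, i.e. projecting
`F` onto `E⁺_k(x_n)` along `E⁻_k(x_n)` shrinks norms by at most a fixed factor. The map `x_n`
stretches the `E⁺_k(x_n)`-component by at least `σ_k` and the `E⁻_k(x_n)`-component by at most
`σ_{k+1}`, so `x_n F` lies within relative distance `O(σ_{k+1}/σ_k)` of `x_n E⁺_k(x_n)`,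
which tends to `E^u`. -/

open Metric

section SubDist

variable {H : Type*} [NormedAddCommGroup H] [NormedSpace ℝ H]

lemma hausdorffEDist_subDist_ne_top (F F' : Submodule ℝ H) :
    hausdorffEDist ((F : Set H) ∩ closedBall 0 1) ((F' : Set H) ∩ closedBall 0 1) ≠ ⊤ :=
  hausdorffEDist_ne_top_of_nonempty_of_bounded ⟨0, F.zero_mem, by simp⟩ ⟨0, F'.zero_mem, by simp⟩
    (isBounded_closedBall.subset Set.inter_subset_right)
    (isBounded_closedBall.subset Set.inter_subset_right)

lemma subDist_self (F : Submodule ℝ H) : subDist F F = 0 := hausdorffDist_self_zero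

lemma subDist_comm (F F' : Submodule ℝ H) : subDist F F' = subDist F' F := hausdorffDist_comm

lemma subDist_triangle (F₁ F₂ F₃ : Submodule ℝ H) :
    subDist F₁ F₃ ≤ subDist F₁ F₂ + subDist F₂ F₃ :=
  hausdorffDist_triangle (hausdorffEDist_subDist_ne_top _ _)

lemma exists_mem_dist_le_of_subDist_lt {F F' : Submodule ℝ H} {r : ℝ} (h : subDist F F' < r)
    {v : H} (hv : v ∈ F) : ∃ w ∈ F', dist v w ≤ r * ‖v‖ := by
  rcases eq_or_ne v 0 with rfl | hv0
  · exact ⟨0, F'.zero_mem, by simp⟩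
  have hnv : 0 < ‖v‖ := norm_pos_iff.2 hv0
  obtain ⟨w, ⟨hwF', -⟩, hdist⟩ := exists_dist_lt_of_hausdorffDist_lt
    (show ‖v‖⁻¹ • v ∈ (F : Set H) ∩ closedBall 0 1 from
      ⟨F.smul_mem _ hv, by simp [norm_smul, hnv.ne']⟩) h (hausdorffEDist_subDist_ne_top F F')
  refine ⟨‖v‖ • w, F'.smul_mem _ hwF', ?_⟩
  calc dist v (‖v‖ • w) = dist (‖v‖ • ‖v‖⁻¹ • v) (‖v‖ • w) := by rw [smul_inv_smul₀ hnv.ne']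
    _ = ‖v‖ * dist (‖v‖⁻¹ • v) w := by rw [dist_smul₀, Real.norm_of_nonneg hnv.le]
    _ ≤ r * ‖v‖ := by rw [mul_comm]; exact mul_le_mul_of_nonneg_right hdist.le hnv.le

lemma subDist_le_of_forall_exists {F F' : Submodule ℝ H} {r : ℝ} (hr : 0 ≤ r)
    (h : ∀ v ∈ F, ∃ w ∈ F', ‖w‖ ≤ ‖v‖ ∧ dist v w ≤ r * ‖v‖)
    (h' : ∀ w ∈ F', ∃ v ∈ F, ‖v‖ ≤ ‖w‖ ∧ dist w v ≤ r * ‖w‖) :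
    subDist F F' ≤ r := by
  have key : ∀ {F F' : Submodule ℝ H}, (∀ v ∈ F, ∃ w ∈ F', ‖w‖ ≤ ‖v‖ ∧ dist v w ≤ r * ‖v‖) →
      ∀ v ∈ (F : Set H) ∩ closedBall 0 1, ∃ w ∈ (F' : Set H) ∩ closedBall 0 1, dist v w ≤ r := by
    rintro F F' h v ⟨hv, hv1⟩
    rw [mem_closedBall_zero_iff] at hv1
    obtain ⟨w, hw, hwv, hdist⟩ := h v hv
    exact ⟨w, ⟨hw, mem_closedBall_zero_iff.2 (hwv.trans hv1)⟩,
      hdist.trans (mul_le_of_le_one_right hr hv1)⟩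
  exact hausdorffDist_le_of_mem_dist hr (key h) (key h')

lemma isOpen_setOf_subDist_lt (F : Submodule ℝ H) {ε : ℝ} (hε : 0 < ε) :
    IsOpen {F' : Submodule ℝ H | subDist F F' < ε} :=
  TopologicalSpace.isOpen_generateFrom_of_mem ⟨F, ε, hε, rfl⟩

end SubDist

section Transversality

variable {H : Type*} [NormedAddCommGroup H] [NormedSpace ℝ H]

/-- `c` bounds from below the sine of the angle between `F` and `G`. -/
def IsTransverseWith (c : ℝ) (G F : Submodule ℝ H) : Prop :=
  ∀ v ∈ F, c * ‖v‖ ≤ infDist v G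

lemma IsTransverseWith.mono {c c' : ℝ} {G F : Submodule ℝ H} (h : IsTransverseWith c G F)
    (hc : c' ≤ c) : IsTransverseWith c' G F :=
  fun v hv => (mul_le_mul_of_nonneg_right hc (norm_nonneg v)).trans (h v hv)

lemma exists_isTransverseWith_of_inf_eq_bot {G F : Submodule ℝ H} [FiniteDimensional ℝ F]
    (hG : IsClosed (G : Set H)) (hFG : F ⊓ G = ⊥) : ∃ c > 0, IsTransverseWith c G F := by
  have hinj : Function.Injective (G.mkQ ∘ₗ F.subtype) := by
    rw [← LinearMap.ker_eq_bot, LinearMap.ker_eq_bot']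
    intro u hu
    have huG : (u : H) ∈ F ⊓ G := ⟨u.2, (Submodule.Quotient.mk_eq_zero G).1 hu⟩
    rw [hFG, Submodule.mem_bot] at huG
    exact Subtype.ext huG
  obtain ⟨K, hK, hanti⟩ := (LinearMap.injective_iff_antilipschitz _).1 hinj
  refine ⟨(K : ℝ)⁻¹, by positivity, fun v hv => ?_⟩
  have hle := hanti.le_mul_dist ⟨v, hv⟩ 0
  rw [map_zero, dist_zero_right, dist_zero_right] at hle
  rw [inv_mul_le_iff₀ (by positivity)]
  have hnorm : ‖(G.mkQ ∘ₗ F.subtype) ⟨v, hv⟩‖ = infDist v G :=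
    QuotientAddGroup.norm_mk (S := G.toAddSubgroup) v
  rwa [hnorm] at hle

lemma IsTransverseWith.of_subDist_lt {c η : ℝ} {G F F' : Submodule ℝ H}
    (h : IsTransverseWith c G F) (hc : 0 ≤ c) (hFF' : subDist F' F < η) :
    IsTransverseWith (c * (1 - η) - η) G F' := by
  intro v hv
  obtain ⟨w, hw, hvw⟩ := exists_mem_dist_le_of_subDist_lt hFF' hv
  have hw_norm : (1 - η) * ‖v‖ ≤ ‖w‖ := by
    have := norm_sub_norm_le v w
    rw [← dist_eq_norm] at this
    linarith
  calc (c * (1 - η) - η) * ‖v‖ = c * ((1 - η) * ‖v‖) - η * ‖v‖ := by ring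
    _ ≤ c * ‖w‖ - dist v w := by gcongr
    _ ≤ infDist w G - dist v w := by gcongr; exact h w hw
    _ ≤ infDist v G := by
      linarith [infDist_le_infDist_add_dist (x := w) (y := v) (s := (G : Set H)), dist_comm v w]

lemma IsTransverseWith.mem_interior_setOf_div_two {c : ℝ} {G F : Submodule ℝ H} (h : IsTransverseWith c G F)
    (hc0 : 0 < c) (hc1 : c ≤ 1) :
    F ∈ interior {F' | IsTransverseWith (c / 2) G F'} := by
  refine mem_interior.2 ⟨{F' | subDist F F' < c / 4}, fun F' hF' => ?_,
    isOpen_setOf_subDist_lt F (by positivity), by simp [subDist_self, hc0]⟩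
  rw [Set.mem_ofPred_eq, subDist_comm] at hF'
  exact (h.of_subDist_lt hc0.le hF').mono (by nlinarith)

lemma IsCompact.exists_isTransverseWith [FiniteDimensional ℝ H] {G : Submodule ℝ H}
    {K : Set (Submodule ℝ H)} (hK : IsCompact K) (hG : IsClosed (G : Set H))
    (hKG : ∀ F ∈ K, F ⊓ G = ⊥) : ∃ c > 0, ∀ F ∈ K, IsTransverseWith c G F := by
  set U : ℕ → Set (Submodule ℝ H) :=
    fun m => interior {F | IsTransverseWith (1 / (m + 1)) G F}
  have hU_mono : Monotone U := fun m m' hmm' =>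
    interior_mono fun F hF => hF.mono (by gcongr)
  have hK_cover : K ⊆ ⋃ m, U m := by
    intro F hF
    obtain ⟨c, hc0, hc⟩ := exists_isTransverseWith_of_inf_eq_bot hG (hKG F hF)
    obtain ⟨m, hm⟩ := exists_nat_one_div_lt (show 0 < min c 1 / 2 by positivity)
    exact Set.mem_iUnion.2 ⟨m, interior_mono (fun F' hF' => hF'.mono hm.le)
      ((hc.mono (min_le_left c 1)).mem_interior_setOf_div_two (by positivity) (min_le_right c 1))⟩
  obtain ⟨m, hm⟩ := hK.elim_directed_cover U (fun m => isOpen_interior) hK_cover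
    hU_mono.directed_le
  exact ⟨1 / (m + 1), by positivity, fun F hF => interior_subset (hm hF)⟩

end Transversality

section SingularValues

variable {H : Type*} [NormedAddCommGroup H] [InnerProductSpace ℝ H]

lemma sVal_nonneg (f : H →ₗ[ℝ] H) (k : ℕ) : 0 ≤ sVal f k :=
  Real.sSup_nonneg fun _ hr => hr.1

lemma sVal_pos [FiniteDimensional ℝ H] {f : H →ₗ[ℝ] H} (hf : Function.Injective f) {k : ℕ}
    (hk : k ≠ 0) {F₀ : Submodule ℝ H} (hF₀ : finrank ℝ F₀ = k) : 0 < sVal f k := by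
  obtain ⟨K, hK, hanti⟩ := (LinearMap.injective_iff_antilipschitz f).1 hf
  have hmem : (K : ℝ)⁻¹ ∈ {r : ℝ | 0 ≤ r ∧ ∃ F : Submodule ℝ H, finrank ℝ F = k ∧
      ∀ v ∈ F, r * ‖v‖ ≤ ‖f v‖} := by
    refine ⟨by positivity, F₀, hF₀, fun v _ => ?_⟩
    have hle := hanti.le_mul_dist v 0
    rw [map_zero, dist_zero_right, dist_zero_right] at hle
    rwa [inv_mul_le_iff₀ (by positivity)]
  have hbdd : BddAbove {r : ℝ | 0 ≤ r ∧ ∃ F : Submodule ℝ H, finrank ℝ F = k ∧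
      ∀ v ∈ F, r * ‖v‖ ≤ ‖f v‖} := by
    refine ⟨‖LinearMap.toContinuousLinearMap f‖, fun r ⟨_, F, hF, hr⟩ => ?_⟩
    obtain ⟨u, hu, hu0⟩ := Submodule.exists_mem_ne_zero_of_ne_bot
      (show F ≠ ⊥ from fun h => hk (by rw [← hF, h, finrank_bot]))
    refine le_of_mul_le_mul_right ((hr u hu).trans ?_) (norm_pos_iff.2 hu0)
    exact (LinearMap.toContinuousLinearMap f).le_opNorm u
  exact (inv_pos.2 (by exact_mod_cast hK)).trans_le (le_csSup hbdd hmem)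

end SingularValues

lemma tendsto_div_of_tendsto_log_sub_log {α : Type*} {l : Filter α} {a b : α → ℝ}
    (ha : ∀ i, 0 < a i) (hb : ∀ i, 0 ≤ b i)
    (h : Tendsto (fun i => Real.log (a i) - Real.log (b i)) l atTop) :
    Tendsto (fun i => b i / a i) l (nhds 0) := by
  refine tendsto_of_tendsto_of_tendsto_of_le_of_le tendsto_const_nhds
    (Real.tendsto_exp_neg_atTop_nhds_zero.comp h) (fun i => div_nonneg (hb i) (ha i).le)
    fun i => ?_
  rcases (hb i).eq_or_lt with hb0 | hb0
  · rw [← hb0, zero_div]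
    exact (Real.exp_pos _).le
  · simp only [Function.comp_apply, neg_sub, Real.exp_sub, Real.exp_log hb0, Real.exp_log (ha i)]
    rfl

section Projection

variable {H : Type*} [NormedAddCommGroup H] [InnerProductSpace ℝ H]

lemma norm_sub_starProjection_le (E : Submodule ℝ H) [E.HasOrthogonalProjection] (v : H)
    {w : H} (hw : w ∈ E) : ‖v - E.starProjection v‖ ≤ ‖v - w‖ := by
  rw [Submodule.starProjection_minimal]
  exact ciInf_le ⟨0, Set.forall_mem_range.2 fun _ => norm_nonneg _⟩ (⟨w, hw⟩ : E)

lemma infDist_le_norm_starProjection_add {E G : Submodule ℝ H} [E.HasOrthogonalProjection]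
    {r : ℝ} (h : subDist Eᗮ G < r) (v : H) :
    infDist v G ≤ ‖E.starProjection v‖ + r * ‖v‖ := by
  obtain ⟨s, hs, hdist⟩ :=
    exists_mem_dist_le_of_subDist_lt h (E.sub_starProjection_mem_orthogonal v)
  have hr : 0 ≤ r := hausdorffDist_nonneg.trans h.le
  have hperp : ‖v - E.starProjection v‖ ≤ ‖v‖ := by
    simpa using norm_sub_starProjection_le E v E.zero_mem
  calc infDist v G ≤ dist v s := infDist_le_dist_of_mem hs
    _ = ‖E.starProjection v + (v - E.starProjection v - s)‖ := by
        rw [dist_eq_norm]; abel_nf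
    _ ≤ ‖E.starProjection v‖ + dist (v - E.starProjection v) s := by
        rw [dist_eq_norm]; exact norm_add_le _ _
    _ ≤ ‖E.starProjection v‖ + r * ‖v‖ := by gcongr; exact hdist.trans (by gcongr)

end Projection

section Dynamics

variable {H : Type*} [NormedAddCommGroup H] [InnerProductSpace ℝ H] [FiniteDimensional ℝ H]

lemma subDist_le_of_norm_sub_starProjection_le {F₁ F₂ : Submodule ℝ H}
    (hrank : finrank ℝ F₁ = finrank ℝ F₂) {δ : ℝ} (hδ0 : 0 ≤ δ) (hδ : δ ≤ 1 / 2)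
    (h : ∀ v ∈ F₁, ‖v - F₂.starProjection v‖ ≤ δ * ‖v‖) : subDist F₁ F₂ ≤ 4 * δ := by
  have hsurj : ∀ w ∈ F₂, ∃ v ∈ F₁, F₂.starProjection v = w := by
    have hinj : Function.Injective (F₂.orthogonalProjectionOnto.toLinearMap ∘ₗ F₁.subtype) := by
      rw [← LinearMap.ker_eq_bot, LinearMap.ker_eq_bot']
      intro u hu
      have hPu : F₂.starProjection u = 0 := by
        rw [Submodule.starProjection_apply]
        exact congrArg Subtype.val hu
      have hu_le := h u u.2
      rw [hPu, sub_zero] at hu_le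
      exact Subtype.ext (norm_le_zero_iff.1 (by nlinarith [norm_nonneg (u : H)]))
    intro w hw
    obtain ⟨u, hu⟩ :=
      (LinearMap.injective_iff_surjective_of_finrank_eq_finrank hrank).1 hinj ⟨w, hw⟩
    exact ⟨u, u.2, congrArg Subtype.val hu⟩
  apply subDist_le_of_forall_exists (by positivity)
  · intro v hv
    refine ⟨F₂.starProjection v, F₂.starProjection_apply_mem v,
      F₂.norm_starProjection_apply_le v, ?_⟩
    rw [dist_eq_norm]
    nlinarith [h v hv, mul_nonneg hδ0 (norm_nonneg v)]
  · intro w hw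
    obtain ⟨v, hv, rfl⟩ := hsurj w hw
    have hv_le := h v hv
    have hnorm : (1 - δ) * ‖v‖ ≤ ‖F₂.starProjection v‖ := by
      linarith [norm_sub_norm_le v (F₂.starProjection v)]
    refine ⟨(1 - δ) • v, F₁.smul_mem _ hv, ?_, ?_⟩
    · rwa [norm_smul, Real.norm_of_nonneg (by linarith)]
    · calc dist (F₂.starProjection v) ((1 - δ) • v)
            = ‖-(v - F₂.starProjection v) + δ • v‖ := by rw [dist_eq_norm]; congr 1; module
        _ ≤ δ * ‖v‖ + δ * ‖v‖ := by
            refine (norm_add_le _ _).trans ?_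
            rw [norm_neg, norm_smul, Real.norm_of_nonneg hδ0]
            linarith
        _ ≤ 4 * δ * ‖F₂.starProjection v‖ := by
            nlinarith [mul_le_mul_of_nonneg_left hnorm (by positivity : (0 : ℝ) ≤ 4 * δ),
              mul_nonneg (mul_nonneg hδ0 (norm_nonneg v)) (by linarith : (0 : ℝ) ≤ 1 - 2 * δ)]

lemma subDist_map_le_of_singularValue_gap (x : H ≃ₗ[ℝ] H) {E F : Submodule ℝ H}
    (hrank : finrank ℝ F = finrank ℝ E) {s₁ s₂ c : ℝ} (hs₁ : 0 < s₁) (hs₂ : 0 ≤ s₂)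
    (hc : 0 < c) (hplus : ∀ v ∈ E, s₁ * ‖v‖ ≤ ‖x v‖) (hminus : ∀ v ∈ Eᗮ, ‖x v‖ ≤ s₂ * ‖v‖)
    (hF : ∀ v ∈ F, c * ‖v‖ ≤ ‖E.starProjection v‖) (hgap : s₂ / s₁ ≤ c / 8) :
    subDist (F.map x.toLinearMap) (E.map x.toLinearMap) ≤ 16 / c * (s₂ / s₁) := by
  set δ := 4 / c * (s₂ / s₁) with hδ_def
  have hδ0 : 0 ≤ δ := by positivity
  have hδ : δ ≤ 1 / 2 := by
    calc δ ≤ 4 / c * (c / 8) := mul_le_mul_of_nonneg_left hgap (by positivity)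
      _ = 1 / 2 := by field_simp; norm_num
  have hs₂_le : s₂ ≤ c * s₁ / 8 := by
    rw [div_le_iff₀ hs₁] at hgap; linarith
  have hperp : ∀ v, ‖x v - x (E.starProjection v)‖ ≤ s₂ * ‖v‖ := fun v => by
    rw [← map_sub]
    refine (hminus _ (E.sub_starProjection_mem_orthogonal v)).trans ?_
    gcongr
    simpa using norm_sub_starProjection_le E v E.zero_mem
  have hlower : ∀ v ∈ F, c * s₁ / 4 * ‖v‖ ≤ ‖x v‖ := fun v hv => by
    have hPv := hplus _ (E.starProjection_apply_mem v)
    have htri := norm_sub_norm_le (x (E.starProjection v)) (x v)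
    rw [norm_sub_rev] at htri
    nlinarith [hperp v, hF v hv, norm_nonneg v]
  rw [show 16 / c * (s₂ / s₁) = 4 * δ by ring]
  refine subDist_le_of_norm_sub_starProjection_le
    (by rwa [x.finrank_map_eq, x.finrank_map_eq]) hδ0 hδ ?_
  rintro _ ⟨v, hv, rfl⟩
  calc ‖x v - (E.map x.toLinearMap).starProjection (x v)‖ ≤ ‖x v - x (E.starProjection v)‖ :=
        norm_sub_starProjection_le _ _ ⟨_, E.starProjection_apply_mem v, rfl⟩
    _ ≤ s₂ * ‖v‖ := hperp v
    _ = δ * (c * s₁ / 4 * ‖v‖) := by rw [hδ_def]; field_simp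
    _ ≤ δ * ‖x v‖ := mul_le_mul_of_nonneg_left (hlower v hv) hδ0

end Dynamics

/-- If `log σ_k(x_n) − log σ_{k+1}(x_n) → ∞`, `x_n · E⁺_k(x_n) → E^u` and
`E⁻_k(x_n) = E⁺_k(x_n)ᗮ → E^s`, then for any compact set `K` of `k`-planes transverse
to `E^s`, `x_n · F → E^u` uniformly over `F ∈ K`. -/
theorem stmt8 {H : Type*} [NormedAddCommGroup H] [InnerProductSpace ℝ H]
    [FiniteDimensional ℝ H] (k : ℕ)
    (x : ℕ → (H ≃ₗ[ℝ] H)) (E : ℕ → Submodule ℝ H)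
    (hEdim : ∀ n, finrank ℝ (E n) = k)
    -- `E n` is the space `E⁺_k(x n)` spanned by the eigenvectors of `(x n)*(x n)`
    -- with eigenvalue at least `σ_k(x n)²`, and `(E n)ᗮ = E⁻_k(x n)`:
    (hEplus : ∀ n, ∀ v ∈ E n, sVal (x n).toLinearMap k * ‖v‖ ≤ ‖x n v‖)
    (hEminus : ∀ n, ∀ v ∈ (E n)ᗮ, ‖x n v‖ ≤ sVal (x n).toLinearMap (k + 1) * ‖v‖)
    (hgap : Tendsto (fun n => Real.log (sVal (x n).toLinearMap k)
              - Real.log (sVal (x n).toLinearMap (k + 1))) atTop atTop)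
    (Eu Es : Submodule ℝ H)
    (hEu : Tendsto (fun n => subDist (Submodule.map (x n).toLinearMap (E n)) Eu) atTop (nhds 0))
    (hEs : Tendsto (fun n => subDist ((E n)ᗮ) Es) atTop (nhds 0))
    (K : Set (Submodule ℝ H)) (hKcpt : IsCompact K)
    (hKdim : ∀ F ∈ K, finrank ℝ F = k)
    (hKtrans : ∀ F ∈ K, F ⊓ Es = ⊥) :
    ∀ ε : ℝ, 0 < ε → ∃ N : ℕ, ∀ n ≥ N, ∀ F ∈ K,
      subDist (Submodule.map (x n).toLinearMap F) Eu < ε := by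
  intro ε hε
  -- `sVal _ 0` is the junk value `0` (its defining set is unbounded), so `k = 0` is treated apart.
  rcases Nat.eq_zero_or_pos k with rfl | hk
  · have hE : ∀ n, E n = ⊥ := fun n => Submodule.finrank_eq_zero.1 (hEdim n)
    have hEu_bot : subDist ⊥ Eu = 0 :=
      tendsto_nhds_unique tendsto_const_nhds (by simpa only [hE, Submodule.map_bot] using hEu)
    refine ⟨0, fun n _ F hF => ?_⟩
    rwa [Submodule.finrank_eq_zero.1 (hKdim F hF), Submodule.map_bot, hEu_bot]
  obtain ⟨c, hc, hKc⟩ :=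
    hKcpt.exists_isTransverseWith (Submodule.closed_of_finiteDimensional Es) hKtrans
  have hratio := tendsto_div_of_tendsto_log_sub_log
    (fun n => sVal_pos (x n).injective hk.ne' (hEdim n)) (fun n => sVal_nonneg _ _) hgap
  have hbound := (hratio.const_mul (16 / (c / 2))).eventually
    (gt_mem_nhds (show 16 / (c / 2) * 0 < ε / 2 by rw [mul_zero]; positivity))
  obtain ⟨N, hN⟩ := eventually_atTop.1 <| (hEs.eventually_lt_const (half_pos hc)).and <|
    (hEu.eventually_lt_const (half_pos hε)).and <|
    (hratio.eventually_le_const (by positivity : (0 : ℝ) < c / 2 / 8)).and hbound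
  refine ⟨N, fun n hn F hF => ?_⟩
  obtain ⟨hEs_n, hEu_n, hgap_n, hbound_n⟩ := hN n hn
  have hproj : ∀ v ∈ F, c / 2 * ‖v‖ ≤ ‖(E n).starProjection v‖ := fun v hv => by
    linarith [hKc F hF v hv, infDist_le_norm_starProjection_add hEs_n v]
  have hmap := subDist_map_le_of_singularValue_gap (x n) ((hKdim F hF).trans (hEdim n).symm)
    (sVal_pos (x n).injective hk.ne' (hEdim n)) (sVal_nonneg _ _) (half_pos hc)
    (hEplus n) (hEminus n) hproj hgap_n
  linarith [subDist_triangle (F.map (x n).toLinearMap) ((E n).map (x n).toLinearMap) Eu]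
end

section
/- Let (H, ω) be a symplectic space with an adapted inner product, and let x_n be a sequence of symplectic isomorphisms of H such that σ_k(x_n) → ∞, σ_k(x_n) > σ_{k+1}(x_n) for all n, and x_n · E⁺_k(x_n) converges to a subspace E^u. Then E^u is isotropic for ω. -/
open Module Filter RealInnerProductSpace

/-- Let `x_n` be symplectic isomorphisms with `σ_k(x_n) → ∞`, `σ_k(x_n) > σ_{k+1}(x_n)`,
and suppose `x_n · E⁺_k(x_n)` converges to a subspace `E^u`. Then `E^u` is isotropic. -/
theorem stmt10 {H : Type*} [NormedAddCommGroup H] [InnerProductSpace ℝ H]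
    [FiniteDimensional ℝ H] (k : ℕ)
    (ω : H →ₗ[ℝ] H →ₗ[ℝ] ℝ)
    (halt : ∀ u v : H, ω u v = - ω v u)
    (hnd : ∀ u : H, (∀ v : H, ω u v = 0) → u = 0)
    -- the inner product is adapted to `ω`: `ω u v = ⟪u, Ω v⟫` with `Ω` orthogonal
    (Ω : H ≃ₗᵢ[ℝ] H) (hΩ : ∀ u v : H, ω u v = ⟪u, Ω v⟫)
    (x : ℕ → (H ≃ₗ[ℝ] H))
    (hsymp : ∀ n, ∀ u v : H, ω (x n u) (x n v) = ω u v)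
    (hgrow : Tendsto (fun n => sVal (x n).toLinearMap k) atTop atTop)
    (hgap : ∀ n, sVal (x n).toLinearMap (k + 1) < sVal (x n).toLinearMap k)
    (E : ℕ → Submodule ℝ H)
    (hEdim : ∀ n, finrank ℝ (E n) = k)
    -- `E n = E⁺_k(x n)`:
    (hEplus : ∀ n, ∀ v ∈ E n, sVal (x n).toLinearMap k * ‖v‖ ≤ ‖x n v‖)
    (hEminus : ∀ n, ∀ v ∈ (E n)ᗮ, ‖x n v‖ ≤ sVal (x n).toLinearMap (k + 1) * ‖v‖)
    (Eu : Submodule ℝ H) (hEuk : finrank ℝ Eu = k)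
    (hconv : Tendsto (fun n => subDist (Submodule.map (x n).toLinearMap (E n)) Eu)
      atTop (nhds 0)) :
    ∀ u ∈ Eu, ∀ v ∈ Eu, ω u v = 0 := by
  have key : ∀ u ∈ Eu, ‖u‖ ≤ 1 → ∀ v ∈ Eu, ‖v‖ ≤ 1 → ω u v = 0 := by
    intro u hu hu1 v hv hv1
    set F : ℕ → Set H := fun n =>
      ((Submodule.map (x n).toLinearMap (E n) : Submodule ℝ H) : Set H) ∩ Metric.closedBall 0 1
      with hF
    have hFne : ∀ n, (F n).Nonempty :=
      fun n => ⟨0, Submodule.zero_mem _, Metric.mem_closedBall_self zero_le_one⟩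
    have hne : ∀ n, EMetric.hausdorffEdist ((Eu : Set H) ∩ Metric.closedBall 0 1) (F n) ≠ ⊤ := by
      intro n
      exact Metric.hausdorffEdist_ne_top_of_nonempty_of_bounded
        ⟨0, Submodule.zero_mem _, Metric.mem_closedBall_self zero_le_one⟩ (hFne n)
        (Metric.isBounded_closedBall.subset Set.inter_subset_right)
        (Metric.isBounded_closedBall.subset Set.inter_subset_right)
    have hinf : ∀ n, ∀ z ∈ Eu, ‖z‖ ≤ 1 →
        Metric.infDist z (F n) ≤ subDist (Submodule.map (x n).toLinearMap (E n)) Eu := by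
      intro n z hz hz1
      have hzB : z ∈ (Eu : Set H) ∩ Metric.closedBall 0 1 :=
        ⟨hz, by simpa [Metric.mem_closedBall] using hz1⟩
      have := Metric.infDist_le_hausdorffDist_of_mem hzB (hne n)
      rwa [subDist, Metric.hausdorffDist_comm]
    have pick : ∀ z ∈ Eu, ‖z‖ ≤ 1 →
        ∃ w : ℕ → H, (∀ n, w n ∈ F n) ∧ Tendsto w atTop (nhds z) := by
      intro z hz hz1
      have h : ∀ n, ∃ y ∈ F n,
          dist z y < subDist (Submodule.map (x n).toLinearMap (E n)) Eu + 1/(n+1) := by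
        intro n
        refine (Metric.infDist_lt_iff (hFne n)).1 ?_
        have h1 := hinf n z hz hz1
        have hpos : (0:ℝ) < 1/(n+1) := by positivity
        linarith
      choose w hw hd using h
      refine ⟨w, hw, ?_⟩
      rw [tendsto_iff_dist_tendsto_zero]
      have hb : Tendsto
          (fun n : ℕ => subDist (Submodule.map (x n).toLinearMap (E n)) Eu + 1/(n+1))
          atTop (nhds 0) := by
        simpa using hconv.add tendsto_one_div_add_atTop_nhds_zero_nat
      refine squeeze_zero (fun n => dist_nonneg) (fun n => ?_) hb
      rw [dist_comm]
      exact (hd n).le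
    obtain ⟨w, hw, hwt⟩ := pick u hu hu1
    obtain ⟨w', hw', hwt'⟩ := pick v hv hv1
    have hlim1 : Tendsto (fun n => ⟪w n, Ω (w' n)⟫) atTop (nhds ⟪u, Ω v⟫) :=
      hwt.inner ((Ω.continuous.tendsto v).comp hwt')
    have hbnd : ∀ᶠ n in atTop, ‖⟪w n, Ω (w' n)⟫‖ ≤
        (sVal (x n).toLinearMap k)⁻¹ * (sVal (x n).toLinearMap k)⁻¹ := by
      filter_upwards [hgrow.eventually_ge_atTop 1] with n hn
      obtain ⟨hw1, hw2⟩ := hw n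
      obtain ⟨hw'1, hw'2⟩ := hw' n
      obtain ⟨a, ha, hxa⟩ := hw1
      obtain ⟨b, hb, hxb⟩ := hw'1
      have hs : (0:ℝ) < sVal (x n).toLinearMap k := lt_of_lt_of_le one_pos hn
      have hxa' : x n a = w n := hxa
      have hxb' : x n b = w' n := hxb
      have bound : ∀ c : H, c ∈ E n → ∀ y : H, x n c = y → y ∈ Metric.closedBall (0:H) 1 →
          ‖c‖ ≤ (sVal (x n).toLinearMap k)⁻¹ := by
        intro c hc y hy hyB
        have h1 : sVal (x n).toLinearMap k * ‖c‖ ≤ ‖x n c‖ := hEplus n c hc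
        have h2 : ‖x n c‖ ≤ 1 := by rw [hy]; exact mem_closedBall_zero_iff.1 hyB
        have h3 : sVal (x n).toLinearMap k * ‖c‖ ≤ 1 := h1.trans h2
        calc ‖c‖ = (sVal (x n).toLinearMap k)⁻¹ * (sVal (x n).toLinearMap k * ‖c‖) := by
              field_simp
          _ ≤ (sVal (x n).toLinearMap k)⁻¹ * 1 :=
              mul_le_mul_of_nonneg_left h3 (by positivity)
          _ = (sVal (x n).toLinearMap k)⁻¹ := mul_one _
      have hna := bound a ha (w n) hxa' hw2
      have hnb := bound b hb (w' n) hxb' hw'2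
      have heq : ⟪w n, Ω (w' n)⟫ = ⟪a, Ω b⟫ := by
        rw [← hΩ, ← hΩ, ← hxa', ← hxb', hsymp]
      rw [heq]
      calc ‖⟪a, Ω b⟫‖ ≤ ‖a‖ * ‖Ω b‖ := norm_inner_le_norm a (Ω b)
        _ = ‖a‖ * ‖b‖ := by rw [Ω.norm_map]
        _ ≤ (sVal (x n).toLinearMap k)⁻¹ * (sVal (x n).toLinearMap k)⁻¹ :=
            mul_le_mul hna hnb (norm_nonneg b) (by positivity)
    have hzero : Tendsto (fun n => ⟪w n, Ω (w' n)⟫) atTop (nhds 0) := by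
      have hinv : Tendsto (fun n => (sVal (x n).toLinearMap k)⁻¹) atTop (nhds 0) :=
        tendsto_inv_atTop_zero.comp hgrow
      have : Tendsto (fun n => (sVal (x n).toLinearMap k)⁻¹ * (sVal (x n).toLinearMap k)⁻¹)
          atTop (nhds 0) := by simpa using hinv.mul hinv
      exact squeeze_zero_norm' hbnd this
    have h0 : ⟪u, Ω v⟫ = (0:ℝ) := tendsto_nhds_unique hlim1 hzero
    rw [hΩ]; exact h0
  intro u hu v hv
  rcases eq_or_ne u 0 with rfl | hu0
  · simp
  rcases eq_or_ne v 0 with rfl | hv0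
  · simp
  have hnu : (0:ℝ) < ‖u‖ := norm_pos_iff.2 hu0
  have hnv : (0:ℝ) < ‖v‖ := norm_pos_iff.2 hv0
  have h := key (‖u‖⁻¹ • u) (Eu.smul_mem _ hu)
    (le_of_eq (by rw [norm_smul, Real.norm_eq_abs, abs_of_pos (inv_pos.2 hnu),
      inv_mul_cancel₀ hnu.ne']))
    (‖v‖⁻¹ • v) (Eu.smul_mem _ hv)
    (le_of_eq (by rw [norm_smul, Real.norm_eq_abs, abs_of_pos (inv_pos.2 hnv),
      inv_mul_cancel₀ hnv.ne']))
  simp only [map_smul, LinearMap.smul_apply, smul_eq_mul] at h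
  rcases mul_eq_zero.1 h with h1 | h1
  · exact absurd h1 (inv_ne_zero hnv.ne')
  rcases mul_eq_zero.1 h1 with h2 | h2
  · exact absurd h2 (inv_ne_zero hnu.ne')
  exact h2
end

section
/- Let π = (π₀, π₁) be an irreducible pair of bijections 𝒜 → {1,...,d} and let Ω(π) be the associated antisymmetric translation matrix. Then for any Rauzy arrow γ from π to π' with associated transition matrix Θ(γ), one has Θ(γ) Ω(π) Θ(γ)* = Ω(π'); consequently Θ(γ) restricts to a symplectic isomorphism from (H(π), ω_π) to (H(π'), ω_{π'}). -/
open Matrix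

/-- The antisymmetric translation matrix `Ω(π)` of a permutation pair:
`⟨Ω(π)·e_j, e_i⟩ = 1` if `π₀(j) > π₀(i)` and `π₁(j) < π₁(i)`, `= −1` in the opposite
case, and `0` otherwise. -/
def OmegaMat {A : Type*} [DecidableEq A] {n : ℕ} (π₀ π₁ : A ≃ Fin n) : Matrix A A ℝ :=
  Matrix.of fun i j =>
    if (π₀ i : ℕ) < (π₀ j : ℕ) ∧ (π₁ j : ℕ) < (π₁ i : ℕ) then 1
    else if (π₀ j : ℕ) < (π₀ i : ℕ) ∧ (π₁ i : ℕ) < (π₁ j : ℕ) then -1 else 0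

/-- Irreducibility of a permutation pair. -/
def Irred {A : Type*} {n : ℕ} (π₀ π₁ : A ≃ Fin n) : Prop :=
  ∀ k : ℕ, 0 < k → k < n → {a : A | (π₀ a : ℕ) < k} ≠ {a : A | (π₁ a : ℕ) < k}

/-- The top Rauzy operation: `x` is the last letter of the top row, `y` the last letter
of the bottom row; the top row is kept, and `y` is reinserted in the bottom row
immediately to the right of the position of `x`. -/
def RauzyTop {A : Type*} [DecidableEq A] {n : ℕ} (π₀ π₁ π₀' π₁' : A ≃ Fin n) (x y : A) : Prop :=
  (π₀ x : ℕ) = n - 1 ∧ (π₁ y : ℕ) = n - 1 ∧ π₀' = π₀ ∧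
  ∀ z : A, (π₁' z : ℕ) =
    if (π₁ z : ℕ) ≤ (π₁ x : ℕ) then (π₁ z : ℕ)
    else if z = y then (π₁ x : ℕ) + 1 else (π₁ z : ℕ) + 1

/-- The bottom Rauzy operation, dual to the top one. -/
def RauzyBot {A : Type*} [DecidableEq A] {n : ℕ} (π₀ π₁ π₀' π₁' : A ≃ Fin n) (x y : A) : Prop :=
  (π₀ x : ℕ) = n - 1 ∧ (π₁ y : ℕ) = n - 1 ∧ π₁' = π₁ ∧
  ∀ z : A, (π₀' z : ℕ) =
    if (π₀ z : ℕ) ≤ (π₀ y : ℕ) then (π₀ z : ℕ)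
    else if z = x then (π₀ y : ℕ) + 1 else (π₀ z : ℕ) + 1

set_option maxHeartbeats 2000000 in
/-- Entrywise effect of a top Rauzy move on the `Ω`-matrix. -/
lemma omega_top {A : Type*} [DecidableEq A] {n : ℕ} (π₀ π₁ π₁' : A ≃ Fin n) (x y : A)
    (hxy : x ≠ y) (hx : (π₀ x : ℕ) = n - 1) (hy : (π₁ y : ℕ) = n - 1)
    (h1 : ∀ z : A, (π₁' z : ℕ) = if (π₁ z : ℕ) ≤ (π₁ x : ℕ) then (π₁ z : ℕ)
      else if z = y then (π₁ x : ℕ) + 1 else (π₁ z : ℕ) + 1)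
    (i j : A) :
    OmegaMat π₀ π₁' i j = OmegaMat π₀ π₁ i j
      + (if i = y then OmegaMat π₀ π₁ x j else 0)
      + (if j = y then OmegaMat π₀ π₁ i x else 0) := by
  have by' : ∀ z : A, (π₁ z : ℕ) ≤ (π₁ y : ℕ) := fun z => by
    have := (π₁ z).isLt; omega
  have bx : ∀ z : A, (π₀ z : ℕ) ≤ (π₀ x : ℕ) := fun z => by
    have := (π₀ z).isLt; omega
  have inj1 : ∀ a b : A, a ≠ b → (π₁ a : ℕ) ≠ (π₁ b : ℕ) := fun a b hab h =>
    hab (π₁.injective (Fin.val_injective h))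
  have lnk : ∀ a b : A, ((π₀ a : ℕ) = (π₀ b : ℕ)) ↔ ((π₁ a : ℕ) = (π₁ b : ℕ)) := by
    intro a b
    constructor <;> intro h
    · rw [π₀.injective (Fin.val_injective h)]
    · rw [π₁.injective (Fin.val_injective h)]
  have hi := h1 i; have hj := h1 j
  have bxi := bx i; have bxj := bx j; have bxy := bx y
  have byi := by' i; have byj := by' j; have byx := by' x
  have hxlt : (π₁ x : ℕ) < (π₁ y : ℕ) := lt_of_le_of_ne (by' x) (inj1 x y hxy)
  have l0ij := lnk i j; have l0ix := lnk i x; have l0jx := lnk j x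
  have l0iy := lnk i y; have l0jy := lnk j y; have l0xy := lnk x y
  by_cases hiy : i = y <;> by_cases hjy : j = y <;>
    simp only [OmegaMat, of_apply, hiy, hjy, eq_self_iff_true, if_true, if_false,
      ite_true, ite_false] at hi hj ⊢ <;>
    split_ifs at hi hj ⊢ <;> first | (exfalso; omega) | norm_num

/-- `Ω` is antisymmetric under swapping the two permutations. -/
lemma omega_swap {A : Type*} [DecidableEq A] {n : ℕ} (π₀ π₁ : A ≃ Fin n) :
    OmegaMat π₁ π₀ = -(OmegaMat π₀ π₁) := by
  ext i j
  simp only [OmegaMat, of_apply, Matrix.neg_apply]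
  split_ifs <;> first | (exfalso; omega) | norm_num

/-- `Ω` is an antisymmetric matrix. -/
lemma omega_anti {A : Type*} [DecidableEq A] {n : ℕ} (π₀ π₁ : A ≃ Fin n) :
    (OmegaMat π₀ π₁)ᵀ = -(OmegaMat π₀ π₁) := by
  ext i j
  simp only [OmegaMat, transpose_apply, of_apply, Matrix.neg_apply]
  split_ifs <;> first | (exfalso; omega) | norm_num

lemma omega_diag {A : Type*} [DecidableEq A] {n : ℕ} (π₀ π₁ : A ≃ Fin n) (z : A) :
    OmegaMat π₀ π₁ z z = 0 := by
  simp [OmegaMat]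

lemma stdBasis_transpose {A : Type*} [DecidableEq A] (y x : A) :
    (single y x (1 : ℝ))ᵀ = single x y 1 := by
  ext a b
  simp [single, transpose_apply, and_comm]

/-- Entrywise formula for conjugation by `1 + E_{yx}`. -/
lemma conj_entry {A : Type*} [Fintype A] [DecidableEq A] (M : Matrix A A ℝ) (y x i j : A) :
    (((1 + single y x 1) * M * (1 + single y x 1)ᵀ : Matrix A A ℝ)) i j =
      M i j + (if i = y then M x j else 0) + (if j = y then M i x else 0)
        + (if j = y then (if i = y then M x x else 0) else 0) := by
  have hE : ∀ (N : Matrix A A ℝ) (a b : A),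
      (single y x (1 : ℝ) * N) a b = if a = y then N x b else 0 := by
    intro N a b
    by_cases h : a = y
    · subst h; simp
    · simp [h]
  have hEt : ∀ (N : Matrix A A ℝ) (a b : A),
      (N * (single y x (1 : ℝ))ᵀ) a b = if b = y then N a x else 0 := by
    intro N a b
    rw [stdBasis_transpose]
    by_cases h : b = y
    · subst h; simp
    · simp [h]
  have hexp : (1 + single y x (1 : ℝ)) * M * (1 + single y x 1)ᵀ
      = M + single y x 1 * M
        + (M * (single y x 1)ᵀ + single y x 1 * M * (single y x 1)ᵀ) := by
    rw [transpose_add, transpose_one]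
    noncomm_ring
  rw [hexp]
  simp only [Matrix.add_apply, hE, hEt]
  ring

/-- The consequences (surjectivity onto `H(π')` and symplecticity) of the
conjugation identity. -/
lemma parts23 {A : Type*} [Fintype A] [DecidableEq A] (Θ Θ' Ω Ω' : Matrix A A ℝ)
    (h1 : Θ * Ω * Θᵀ = Ω') (hinv1 : Θ * Θ' = 1) (hinv2 : Θ' * Θ = 1)
    (hanti : Ωᵀ = -Ω) :
    (∀ w : A → ℝ, (∃ u : A → ℝ, w = Θ *ᵥ (Ω *ᵥ u)) ↔ (∃ u' : A → ℝ, w = Ω' *ᵥ u')) ∧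
    (∀ u v u' v' : A → ℝ, Ω' *ᵥ u' = Θ *ᵥ (Ω *ᵥ u) → Ω' *ᵥ v' = Θ *ᵥ (Ω *ᵥ v) →
      u' ⬝ᵥ (Ω' *ᵥ v') = u ⬝ᵥ (Ω *ᵥ v)) := by
  have hTT : Θᵀ * Θ'ᵀ = 1 := by rw [← transpose_mul, hinv2, transpose_one]
  constructor
  · intro w
    constructor
    · rintro ⟨u, rfl⟩
      refine ⟨Θ'ᵀ *ᵥ u, ?_⟩
      rw [mulVec_mulVec, mulVec_mulVec, ← h1, mul_assoc (Θ * Ω), hTT, mul_one]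
    · rintro ⟨u', rfl⟩
      refine ⟨Θᵀ *ᵥ u', ?_⟩
      rw [mulVec_mulVec, mulVec_mulVec, ← h1, mul_assoc]
  · intro u v u' v' hu hv
    have hcan : ∀ (a a' : A → ℝ), Ω' *ᵥ a' = Θ *ᵥ (Ω *ᵥ a) → Ω *ᵥ (Θᵀ *ᵥ a') = Ω *ᵥ a := by
      intro a a' h
      have h2 : Θ' *ᵥ (Ω' *ᵥ a') = Θ' *ᵥ (Θ *ᵥ (Ω *ᵥ a)) := by rw [h]
      rw [mulVec_mulVec, mulVec_mulVec, mulVec_mulVec, hinv2, one_mul] at h2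
      rw [mulVec_mulVec, ← h2, ← h1]
      congr 1
      rw [← mul_assoc, ← mul_assoc, hinv2, one_mul]
    have hu' := hcan u u' hu
    rw [hv, mulVec_mulVec, dotProduct_mulVec, ← mulVec_transpose, transpose_mul, ← mulVec_mulVec,
      dotProduct_mulVec u, ← mulVec_transpose, hanti, neg_mulVec, neg_mulVec, hu']

/-- For any Rauzy arrow `γ` from `π` to `π'` with transition matrix `Θ(γ)`, one has
`Θ(γ) Ω(π) Θ(γ)* = Ω(π')`; consequently `Θ(γ)` restricts to a symplectic isomorphism
`(H(π), ω_π) → (H(π'), ω_{π'})`, where `H(π) = Ω(π)·ℝ^𝒜` and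
`ω_π(Ω(π)u, Ω(π)v) = ⟨u, Ω(π)v⟩`. -/
theorem stmt16 {A : Type*} [Fintype A] [DecidableEq A]
    (π₀ π₁ π₀' π₁' : A ≃ Fin (Fintype.card A)) (x y : A)
    (hirr : Irred π₀ π₁)
    (Θ : Matrix A A ℝ)
    (harrow :
      (RauzyTop π₀ π₁ π₀' π₁' x y ∧ Θ = 1 + Matrix.single y x 1) ∨
      (RauzyBot π₀ π₁ π₀' π₁' x y ∧ Θ = 1 + Matrix.single x y 1)) :
    Θ * OmegaMat π₀ π₁ * Θᵀ = OmegaMat π₀' π₁' ∧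
    -- `Θ` maps `H(π)` onto `H(π')` …
    (∀ w : A → ℝ,
      (∃ u : A → ℝ, w = Θ *ᵥ ((OmegaMat π₀ π₁) *ᵥ u)) ↔
      (∃ u' : A → ℝ, w = (OmegaMat π₀' π₁') *ᵥ u')) ∧
    -- … and is symplectic for `ω_π`, `ω_{π'}`
    (∀ u v u' v' : A → ℝ,
      (OmegaMat π₀' π₁') *ᵥ u' = Θ *ᵥ ((OmegaMat π₀ π₁) *ᵥ u) →
      (OmegaMat π₀' π₁') *ᵥ v' = Θ *ᵥ ((OmegaMat π₀ π₁) *ᵥ v) →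
      u' ⬝ᵥ ((OmegaMat π₀' π₁') *ᵥ v') = u ⬝ᵥ ((OmegaMat π₀ π₁) *ᵥ v)) := by
  -- first extract the basic facts of the arrow
  have hx : (π₀ x : ℕ) = Fintype.card A - 1 := by
    rcases harrow with ⟨⟨h, _⟩, _⟩ | ⟨⟨h, _⟩, _⟩ <;> exact h
  have hy : (π₁ y : ℕ) = Fintype.card A - 1 := by
    rcases harrow with ⟨⟨_, h, _⟩, _⟩ | ⟨⟨_, h, _⟩, _⟩ <;> exact h
  have hcard : 0 < Fintype.card A := Fintype.card_pos_iff.mpr ⟨x⟩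
  -- degenerate case: a single letter
  by_cases hone : Fintype.card A ≤ 1
  · have hsub : ∀ i j : A, i = j := fun i j => by
      have := Fintype.card_le_one_iff.mp hone; exact this i j
    have hz : ∀ (p q : A ≃ Fin (Fintype.card A)), OmegaMat p q = 0 := by
      intro p q; ext i j
      rw [hsub i j]
      simpa using omega_diag p q j
    rw [hz π₀ π₁, hz π₀' π₁']
    refine ⟨by simp, fun w => ?_, fun u v u' v' hu hv => by simp⟩
    simp [Matrix.zero_mulVec, Matrix.mulVec_zero]
  -- main case
  push_neg at hone
  have hxy : x ≠ y := by
    intro h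
    apply hirr (Fintype.card A - 1) (by omega) (by omega)
    ext a
    simp only [Set.mem_setOf_eq]
    have h0 := (π₀ a).isLt
    have h1 := (π₁ a).isLt
    constructor
    · intro ha
      by_cases hay : a = y
      · exfalso; rw [hay, ← h] at ha; omega
      · have h2 : (π₁ a : ℕ) ≠ (π₁ y : ℕ) :=
          fun hc => hay (π₁.injective (Fin.val_injective hc))
        omega
    · intro ha
      by_cases hax : a = x
      · exfalso; rw [hax, h] at ha; omega
      · have h2 : (π₀ a : ℕ) ≠ (π₀ x : ℕ) :=
          fun hc => hax (π₀.injective (Fin.val_injective hc))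
        omega
  -- the conjugation identity in each case
  have key : Θ * OmegaMat π₀ π₁ * Θᵀ = OmegaMat π₀' π₁' := by
    rcases harrow with ⟨⟨_, _, h0, h1⟩, hΘ⟩ | ⟨⟨_, _, h0, h1⟩, hΘ⟩
    · subst hΘ
      ext i j
      rw [conj_entry, h0, omega_top π₀ π₁ π₁' x y hxy hx hy h1 i j]
      simp [omega_diag]
    · subst hΘ
      ext i j
      have h2 := omega_top π₁ π₀ π₀' y x hxy.symm hy hx h1 i j
      rw [omega_swap π₀' π₁, omega_swap π₀ π₁] at h2
      rw [h0]
      rw [conj_entry]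
      simp only [Matrix.neg_apply] at h2
      by_cases h3 : i = x <;> by_cases h4 : j = x <;>
        simp only [h3, h4, eq_self_iff_true, if_true, if_false, ite_true, ite_false,
          omega_diag] at h2 ⊢ <;> linarith
  refine ⟨key, ?_⟩
  -- invertibility of Θ
  obtain ⟨a, b, hΘ⟩ : ∃ a b : A, a ≠ b ∧ Θ = 1 + single a b 1 := by
    rcases harrow with ⟨_, hΘ⟩ | ⟨_, hΘ⟩
    · exact ⟨y, x, fun h => hxy h.symm, hΘ⟩
    · exact ⟨x, y, hxy, hΘ⟩
  obtain ⟨hab, hΘ⟩ := hΘ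
  have hEE : single a b (1 : ℝ) * single a b 1 = 0 :=
    Matrix.single_mul_single_of_ne (1 : ℝ) a b a (Ne.symm hab) 1
  have hinv1 : Θ * (1 - single a b 1) = 1 := by
    rw [hΘ]
    have : (1 + single a b (1:ℝ)) * (1 - single a b 1)
        = 1 - single a b 1 * single a b 1 := by noncomm_ring
    rw [this, hEE, sub_zero]
  have hinv2 : (1 - single a b 1) * Θ = 1 := by
    rw [hΘ]
    have : (1 - single a b (1:ℝ)) * (1 + single a b 1)
        = 1 - single a b 1 * single a b 1 := by noncomm_ring
    rw [this, hEE, sub_zero]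
  exact parts23 Θ (1 - single a b 1) (OmegaMat π₀ π₁) (OmegaMat π₀' π₁')
    key hinv1 hinv2 (omega_anti π₀ π₁)
end

section
/- Let π' be a simple reduction of π (obtained by deleting a letter B from both rows, with the result irreducible). Then either g(π) = g(π') or g(π) = g(π') + 1, and the following are equivalent: (1) g(π) = g(π'); (2) H(π) is spanned by {Ω(π)·e_x : x ≠ B}; (3) e_B ∉ H(π); (4) e_B is not in the span of {Ω(π)·e_x : x ≠ B}; (5) the coordinate projection P : ℝ^𝒜 → ℝ^{𝒜∖{B}} restricts to a symplectic isomorphism (H(π), ω_π) → (H(π'), ω_{π'}). -/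
open Matrix Module

/-- The space `H(π) = Ω(π)·ℝ^𝒜`. -/
noncomputable def Hspace {A : Type*} [Fintype A] [DecidableEq A] {n : ℕ}
    (π₀ π₁ : A ≃ Fin n) : Submodule ℝ (A → ℝ) :=
  LinearMap.range (OmegaMat π₀ π₁).mulVecLin

/-!
Write `M = Ω(π)`, `R = range M` and `W = M (ker e_B^*) = span {M e_x | x ≠ B}`. Deleting `B`
gives `Ω(π') = P M P*`, hence `H(π') = P W`, where `P = deleteCoord B` has kernel `K e_B`.
Since `M` is antisymmetric, `R` is the orthogonal of `ker M`, so `e_B ∈ R` iff every vector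
of `ker M` vanishes at `B`.

If `e_B ∉ R`, a kernel vector with nonzero `B`-coordinate shows `W = R`, and `P` is injective
on `R`; so `P : H(π) → H(π')` is an isomorphism, and it is symplectic because
`ω_π(Mu, Mv) = ⟨u, Mv⟩` only depends on `Mu` and `Mv`.

If `e_B = Mc ∈ R`, then `c_B = ⟨c, Mc⟩ = 0`, so `e_B ∈ W`. Now `ker M ⊆ ker e_B^*` makes `W`
a hyperplane of `R`, and `P` kills the line `K e_B ⊆ W`: the rank drops by two.
-/

theorem Submodule.finrank_map_add_finrank_inf_ker {K V V₂ : Type*} [Field K] [AddCommGroup V]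
    [Module K V] [AddCommGroup V₂] [Module K V₂] [FiniteDimensional K V]
    (f : V →ₗ[K] V₂) (S : Submodule K V) :
    finrank K (S.map f) + finrank K ↥(S ⊓ LinearMap.ker f) = finrank K S := by
  rw [← LinearMap.range_domRestrict, ← Submodule.map_comap_subtype,
    ← (Submodule.equivSubtypeMap S _).finrank_eq, ← LinearMap.ker_domRestrict,
    LinearMap.finrank_range_add_finrank_ker]

theorem Matrix.mem_range_mulVecLin_iff {K m n : Type*} [Field K] [Fintype m] [Fintype n]
    [DecidableEq m] [DecidableEq n] (M : Matrix m n K) (v : m → K) :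
    v ∈ LinearMap.range M.mulVecLin ↔ ∀ k, k ᵥ* M = 0 → v ⬝ᵥ k = 0 := by
  constructor
  · rintro ⟨w, rfl⟩ k hk
    rw [mulVecLin_apply, dotProduct_comm, dotProduct_mulVec, hk, zero_dotProduct]
  · intro h
    have hmem : dotProductEquiv K m v ∈ (LinearMap.ker Mᵀ.mulVecLin).dualAnnihilator := by
      simpa [Submodule.mem_dualAnnihilator] using h
    rw [← LinearMap.range_dualMap_eq_dualAnnihilator_ker] at hmem
    obtain ⟨ψ, hψ⟩ := hmem
    obtain ⟨w, rfl⟩ := (dotProductEquiv K n).surjective ψ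
    refine ⟨w, (dotProductEquiv K m).injective ?_⟩
    rw [← hψ]
    refine LinearMap.ext fun x => ?_
    change (M *ᵥ w) ⬝ᵥ x = w ⬝ᵥ (Mᵀ *ᵥ x)
    rw [dotProduct_mulVec, vecMul_transpose]

def deleteCoord {K A : Type*} [Semiring K] (B : A) : (A → K) →ₗ[K] ({a // a ≠ B} → K) :=
  LinearMap.funLeft K K Subtype.val

@[simp] theorem deleteCoord_apply {K A : Type*} [Semiring K] (B : A) (u : A → K)
    (x : {a // a ≠ B}) : deleteCoord B u x = u x :=
  rfl

section DeleteLetter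

variable {K A : Type*} [Field K] [DecidableEq A] (B : A)

theorem ker_deleteCoord :
    LinearMap.ker (deleteCoord B : (A → K) →ₗ[K] _) = K ∙ Pi.single B 1 := by
  ext h
  simp only [LinearMap.mem_ker, Submodule.mem_span_singleton]
  constructor
  · intro hh
    refine ⟨h B, funext fun a => ?_⟩
    obtain rfl | ha := eq_or_ne a B
    · simp
    · simpa [Pi.single_eq_of_ne ha] using (congrFun hh ⟨a, ha⟩).symm
  · rintro ⟨c, rfl⟩
    funext x
    simp [Pi.single_eq_of_ne x.2]

theorem disjoint_ker_deleteCoord {S : Submodule K (A → K)} (h : Pi.single B 1 ∉ S) :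
    Disjoint S (LinearMap.ker (deleteCoord B)) := by
  rwa [ker_deleteCoord, Submodule.disjoint_span_singleton' (by simp)]

theorem eq_zero_of_deleteCoord_eq_zero {S : Submodule K (A → K)} (h : Pi.single B 1 ∉ S)
    {v : A → K} (hv : v ∈ S) (h0 : deleteCoord B v = 0) : v = 0 :=
  Submodule.disjoint_def.mp (disjoint_ker_deleteCoord B h) v hv h0

theorem finrank_map_deleteCoord_of_single_notMem [Fintype A] {S : Submodule K (A → K)}
    (h : Pi.single B 1 ∉ S) : finrank K (S.map (deleteCoord B)) = finrank K S := by
  have := Submodule.finrank_map_add_finrank_inf_ker (deleteCoord B) S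
  rwa [disjoint_iff.mp (disjoint_ker_deleteCoord B h), finrank_bot, add_zero] at this

theorem finrank_map_deleteCoord_add_one_of_single_mem [Fintype A]
    {S : Submodule K (A → K)} (h : Pi.single B 1 ∈ S) :
    finrank K (S.map (deleteCoord B)) + 1 = finrank K S := by
  have hinf : S ⊓ LinearMap.ker (deleteCoord B) = K ∙ Pi.single B 1 := by
    rw [ker_deleteCoord, inf_eq_right, Submodule.span_singleton_le_iff_mem]
    exact h
  have := Submodule.finrank_map_add_finrank_inf_ker (deleteCoord B) S
  rwa [hinf, finrank_span_singleton (by simp)] at this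

theorem exists_apply_eq_zero_deleteCoord_eq (u' : {a // a ≠ B} → K) :
    ∃ u : A → K, u B = 0 ∧ deleteCoord B u = u' :=
  ⟨fun a => if h : a = B then 0 else u' ⟨a, h⟩, by simp, funext fun x => by simp [x.2]⟩

theorem deleteCoord_dotProduct_deleteCoord [Fintype A] {u : A → K} (hu : u B = 0) (w : A → K) :
    deleteCoord B u ⬝ᵥ deleteCoord B w = u ⬝ᵥ w := by
  simp [dotProduct, Fintype.sum_eq_add_sum_subtype_ne _ B, hu]

variable [Fintype A] (M : Matrix A A K)

theorem submatrix_mulVec_deleteCoord {u : A → K} (hu : u B = 0) :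
    M.submatrix Subtype.val Subtype.val *ᵥ deleteCoord B u = deleteCoord B (M *ᵥ u) := by
  funext x
  simp [mulVec, dotProduct, Fintype.sum_eq_add_sum_subtype_ne _ B, hu]

theorem mulVec_eq_of_submatrix_mulVec_eq (h : Pi.single B 1 ∉ LinearMap.range M.mulVecLin)
    {w x : A → K} (hw : w B = 0)
    (hx : M.submatrix Subtype.val Subtype.val *ᵥ deleteCoord B w = deleteCoord B (M *ᵥ x)) :
    M *ᵥ w = M *ᵥ x := by
  rw [← sub_eq_zero]
  refine eq_zero_of_deleteCoord_eq_zero B h ⟨w - x, by simp [mulVec_sub]⟩ ?_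
  rw [map_sub, ← submatrix_mulVec_deleteCoord B M hw, hx, sub_self]

theorem range_submatrix_mulVecLin :
    LinearMap.range (M.submatrix (↑) (↑) : Matrix {a // a ≠ B} {a // a ≠ B} K).mulVecLin =
      ((LinearMap.ker (LinearMap.proj B)).map M.mulVecLin).map (deleteCoord B) := by
  ext w
  constructor
  · rintro ⟨u', rfl⟩
    obtain ⟨u, hu, rfl⟩ := exists_apply_eq_zero_deleteCoord_eq B u'
    exact ⟨M *ᵥ u, ⟨u, hu, rfl⟩, (submatrix_mulVec_deleteCoord B M hu).symm⟩
  · rintro ⟨_, ⟨u, hu, rfl⟩, rfl⟩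
    exact ⟨_, submatrix_mulVec_deleteCoord B M hu⟩

theorem span_mulVec_single_ne :
    Submodule.span K {w : A → K | ∃ x : A, x ≠ B ∧ w = M *ᵥ Pi.single x 1} =
      (LinearMap.ker (LinearMap.proj B)).map M.mulVecLin := by
  apply le_antisymm
  · rw [Submodule.span_le]
    rintro _ ⟨x, hx, rfl⟩
    exact ⟨Pi.single x 1, by simp [Pi.single_eq_of_ne hx.symm], rfl⟩
  · rintro _ ⟨u, hu, rfl⟩
    rw [← Finset.univ_sum_single u, map_sum]
    refine Submodule.sum_mem _ fun x _ => ?_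
    obtain rfl | hx := eq_or_ne x B
    · simp [show u x = 0 from hu]
    · rw [← mul_one (u x), ← smul_eq_mul, Pi.single_smul', map_smul]
      exact Submodule.smul_mem _ _ (Submodule.subset_span ⟨x, hx, rfl⟩)

end DeleteLetter

theorem dotProduct_mulVec_of_transpose_eq_neg {R A : Type*} [CommRing R] [Fintype A]
    {M : Matrix A A R} (hM : Mᵀ = -M) (u v : A → R) :
    u ⬝ᵥ M *ᵥ v = -(M *ᵥ u ⬝ᵥ v) := by
  rw [dotProduct_mulVec, ← mulVec_transpose, hM, neg_mulVec, neg_dotProduct]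

section Skew

variable {K A : Type*} [Field K] [Fintype A] [DecidableEq A] {M : Matrix A A K}

theorem single_mem_range_mulVecLin_iff (hM : Mᵀ = -M) (B : A) :
    Pi.single B 1 ∈ LinearMap.range M.mulVecLin ↔ ∀ k, M *ᵥ k = 0 → k B = 0 := by
  simp only [mem_range_mulVecLin_iff, ← mulVec_transpose, hM, neg_mulVec, neg_eq_zero,
    single_dotProduct, one_mul]

variable (B : A)

theorem map_ker_proj_eq_range (hM : Mᵀ = -M)
    (h : Pi.single B 1 ∉ LinearMap.range M.mulVecLin) :
    (LinearMap.ker (LinearMap.proj B)).map M.mulVecLin = LinearMap.range M.mulVecLin := by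
  refine le_antisymm LinearMap.map_le_range ?_
  rintro _ ⟨v, rfl⟩
  obtain ⟨k, hk, hkB⟩ : ∃ k, M *ᵥ k = 0 ∧ k B ≠ 0 := by
    simpa [single_mem_range_mulVecLin_iff hM] using h
  refine ⟨v - (v B / k B) • k, ?_, ?_⟩
  · simp [hkB]
  · simp [mulVec_sub, mulVec_smul, hk]

theorem finrank_map_ker_proj_add_one (hM : Mᵀ = -M)
    (h : Pi.single B 1 ∈ LinearMap.range M.mulVecLin) :
    finrank K ((LinearMap.ker (LinearMap.proj B)).map M.mulVecLin) + 1 =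
      finrank K (LinearMap.range M.mulVecLin) := by
  have hker : LinearMap.ker (LinearMap.proj B) ⊓ LinearMap.ker M.mulVecLin =
      LinearMap.ker M.mulVecLin :=
    inf_eq_right.mpr fun k hk => (single_mem_range_mulVecLin_iff hM B).mp h k hk
  have hW :=
    Submodule.finrank_map_add_finrank_inf_ker M.mulVecLin (LinearMap.ker (LinearMap.proj B))
  have hR := M.mulVecLin.finrank_range_add_finrank_ker
  have hproj := (LinearMap.proj B : (A → K) →ₗ[K] K).finrank_range_add_finrank_ker
  rw [LinearMap.range_eq_top.mpr (LinearMap.proj_surjective B), finrank_top,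
    finrank_self] at hproj
  rw [hker] at hW
  omega

theorem single_mem_map_ker_proj [CharZero K] (hM : Mᵀ = -M)
    (h : Pi.single B 1 ∈ LinearMap.range M.mulVecLin) :
    Pi.single B 1 ∈ (LinearMap.ker (LinearMap.proj B)).map M.mulVecLin := by
  obtain ⟨c, hc⟩ := h
  refine ⟨c, ?_, hc⟩
  have hc' := dotProduct_mulVec_of_transpose_eq_neg hM c c
  rwa [dotProduct_comm (M *ᵥ c), ← mulVecLin_apply, hc, self_eq_neg, dotProduct_single,
    mul_one] at hc'

theorem finrank_range_submatrix_of_single_notMem (hM : Mᵀ = -M)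
    (h : Pi.single B 1 ∉ LinearMap.range M.mulVecLin) :
    finrank K (LinearMap.range
        (M.submatrix (↑) (↑) : Matrix {a // a ≠ B} {a // a ≠ B} K).mulVecLin) =
      finrank K (LinearMap.range M.mulVecLin) := by
  rw [range_submatrix_mulVecLin, map_ker_proj_eq_range B hM h,
    finrank_map_deleteCoord_of_single_notMem B h]

theorem finrank_range_submatrix_add_two_of_single_mem [CharZero K] (hM : Mᵀ = -M)
    (h : Pi.single B 1 ∈ LinearMap.range M.mulVecLin) :
    finrank K (LinearMap.range
        (M.submatrix (↑) (↑) : Matrix {a // a ≠ B} {a // a ≠ B} K).mulVecLin) +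
      2 = finrank K (LinearMap.range M.mulVecLin) := by
  have hW := finrank_map_ker_proj_add_one B hM h
  have hP := finrank_map_deleteCoord_add_one_of_single_mem B (single_mem_map_ker_proj B hM h)
  rw [range_submatrix_mulVecLin]
  omega

theorem dotProduct_submatrix_mulVec_eq (hM : Mᵀ = -M)
    (h : Pi.single B 1 ∉ LinearMap.range M.mulVecLin) {u v : A → K}
    {u' v' : {a // a ≠ B} → K}
    (hu : M.submatrix Subtype.val Subtype.val *ᵥ u' = deleteCoord B (M *ᵥ u))
    (hv : M.submatrix Subtype.val Subtype.val *ᵥ v' = deleteCoord B (M *ᵥ v)) :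
    u' ⬝ᵥ M.submatrix Subtype.val Subtype.val *ᵥ v' = u ⬝ᵥ M *ᵥ v := by
  obtain ⟨u₀, hu₀, rfl⟩ := exists_apply_eq_zero_deleteCoord_eq B u'
  obtain ⟨v₀, hv₀, rfl⟩ := exists_apply_eq_zero_deleteCoord_eq B v'
  have hMu := mulVec_eq_of_submatrix_mulVec_eq B M h hu₀ hu
  have hMv := mulVec_eq_of_submatrix_mulVec_eq B M h hv₀ hv
  calc deleteCoord B u₀ ⬝ᵥ M.submatrix Subtype.val Subtype.val *ᵥ deleteCoord B v₀
      = u₀ ⬝ᵥ M *ᵥ v₀ := by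
        rw [submatrix_mulVec_deleteCoord B M hv₀, deleteCoord_dotProduct_deleteCoord B hu₀]
    _ = -(M *ᵥ u₀ ⬝ᵥ v) := by rw [hMv, dotProduct_mulVec_of_transpose_eq_neg hM]
    _ = u ⬝ᵥ M *ᵥ v := by rw [hMu, dotProduct_mulVec_of_transpose_eq_neg hM]

end Skew

section Omega

variable {A : Type*} [DecidableEq A] {n : ℕ}

theorem transpose_omegaMat (π₀ π₁ : A ≃ Fin n) :
    (OmegaMat π₀ π₁)ᵀ = -OmegaMat π₀ π₁ := by
  ext x y
  simp only [OmegaMat, transpose_apply, of_apply, Matrix.neg_apply]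
  split_ifs with h₁ h₂
  · exact absurd h₂.1 (Nat.lt_asymm h₁.1)
  all_goals norm_num

theorem omegaMat_eq_submatrix {A' : Type*} [DecidableEq A'] {n' : ℕ} (f : A' → A)
    (π₀ π₁ : A ≃ Fin n) (π₀' π₁' : A' ≃ Fin n')
    (h₀ : ∀ u v, π₀' u < π₀' v ↔ π₀ (f u) < π₀ (f v))
    (h₁ : ∀ u v, π₁' u < π₁' v ↔ π₁ (f u) < π₁ (f v)) :
    OmegaMat π₀' π₁' = (OmegaMat π₀ π₁).submatrix f f := by
  ext u v
  simp only [OmegaMat, of_apply, submatrix_apply, Fin.val_fin_lt, h₀, h₁]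

end Omega

theorem stmt17_general {A : Type*} [Fintype A] [DecidableEq A] (B : A)
    (π₀ π₁ : A ≃ Fin (Fintype.card A))
    (π₀' π₁' : {a : A // a ≠ B} ≃ Fin (Fintype.card A - 1))
    -- `π'` is obtained from `π` by deleting the letter `B` from both rows
    (hrel₀ : ∀ u v : {a : A // a ≠ B}, π₀' u < π₀' v ↔ π₀ u.val < π₀ v.val)
    (hrel₁ : ∀ u v : {a : A // a ≠ B}, π₁' u < π₁' v ↔ π₁ u.val < π₁ v.val) :
    -- `g(π) = g(π')` or `g(π) = g(π') + 1`:
    (finrank ℝ (Hspace π₀ π₁) = finrank ℝ (Hspace π₀' π₁') ∨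
     finrank ℝ (Hspace π₀ π₁) = finrank ℝ (Hspace π₀' π₁') + 2) ∧
    -- (1) ↔ (2)
    ((finrank ℝ (Hspace π₀ π₁) = finrank ℝ (Hspace π₀' π₁')) ↔
      Hspace π₀ π₁ = Submodule.span ℝ
        {w : A → ℝ | ∃ x : A, x ≠ B ∧ w = (OmegaMat π₀ π₁) *ᵥ Pi.single x 1}) ∧
    -- (1) ↔ (3)
    ((finrank ℝ (Hspace π₀ π₁) = finrank ℝ (Hspace π₀' π₁')) ↔
      Pi.single B (1 : ℝ) ∉ Hspace π₀ π₁) ∧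
    -- (1) ↔ (4)
    ((finrank ℝ (Hspace π₀ π₁) = finrank ℝ (Hspace π₀' π₁')) ↔
      Pi.single B (1 : ℝ) ∉ Submodule.span ℝ
        {w : A → ℝ | ∃ x : A, x ≠ B ∧ w = (OmegaMat π₀ π₁) *ᵥ Pi.single x 1}) ∧
    -- (1) ↔ (5)
    ((finrank ℝ (Hspace π₀ π₁) = finrank ℝ (Hspace π₀' π₁')) ↔
      (Submodule.map (LinearMap.funLeft ℝ ℝ (Subtype.val : {a : A // a ≠ B} → A))
          (Hspace π₀ π₁) = Hspace π₀' π₁' ∧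
       (∀ h ∈ Hspace π₀ π₁,
          LinearMap.funLeft ℝ ℝ (Subtype.val : {a : A // a ≠ B} → A) h = 0 → h = 0) ∧
       (∀ (u v : A → ℝ) (u' v' : {a : A // a ≠ B} → ℝ),
          (OmegaMat π₀' π₁') *ᵥ u' =
            LinearMap.funLeft ℝ ℝ (Subtype.val : {a : A // a ≠ B} → A)
              ((OmegaMat π₀ π₁) *ᵥ u) →
          (OmegaMat π₀' π₁') *ᵥ v' =
            LinearMap.funLeft ℝ ℝ (Subtype.val : {a : A // a ≠ B} → A)
              ((OmegaMat π₀ π₁) *ᵥ v) →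
          u' ⬝ᵥ ((OmegaMat π₀' π₁') *ᵥ v') = u ⬝ᵥ ((OmegaMat π₀ π₁) *ᵥ v)))) := by
  have hM := transpose_omegaMat π₀ π₁
  have hsub : OmegaMat π₀' π₁' = (OmegaMat π₀ π₁).submatrix Subtype.val Subtype.val :=
    omegaMat_eq_submatrix Subtype.val π₀ π₁ π₀' π₁' hrel₀ hrel₁
  have hP : LinearMap.funLeft ℝ ℝ (Subtype.val : {a : A // a ≠ B} → A) = deleteCoord B :=
    rfl
  have hH : Hspace π₀ π₁ = LinearMap.range (OmegaMat π₀ π₁).mulVecLin := rfl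
  have hH' : Hspace π₀' π₁' = LinearMap.range (OmegaMat π₀' π₁').mulVecLin := rfl
  rw [hH, hH', hsub, hP, span_mulVec_single_ne]
  set M := OmegaMat π₀ π₁
  by_cases he : Pi.single B (1 : ℝ) ∈ LinearMap.range M.mulVecLin
  · have hrank := finrank_range_submatrix_add_two_of_single_mem B hM he
    have hW := finrank_map_ker_proj_add_one B hM he
    have hne : (LinearMap.ker (LinearMap.proj B)).map M.mulVecLin ≠
        LinearMap.range M.mulVecLin := fun h => by rw [h] at hW; omega
    have hnotinj : ¬∀ h ∈ LinearMap.range M.mulVecLin, deleteCoord B h = 0 → h = 0 :=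
      fun hinj => by simpa using hinj _ he (funext fun x => by simp [Pi.single_eq_of_ne x.2])
    refine ⟨Or.inr (by omega), ?_, ?_, ?_, ?_⟩
    · exact iff_of_false (by omega) (Ne.symm hne)
    · exact iff_of_false (by omega) (not_not.mpr he)
    · exact iff_of_false (by omega) (not_not.mpr (single_mem_map_ker_proj B hM he))
    · exact iff_of_false (by omega) fun h => hnotinj h.2.1
  · have hrank := finrank_range_submatrix_of_single_notMem B hM he
    have hW := map_ker_proj_eq_range B hM he
    refine ⟨Or.inl hrank.symm, iff_of_true hrank.symm hW.symm, iff_of_true hrank.symm he,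
      iff_of_true hrank.symm (hW ▸ he), iff_of_true hrank.symm ⟨?_, ?_, ?_⟩⟩
    · rw [range_submatrix_mulVecLin, hW]
    · exact fun h hh => eq_zero_of_deleteCoord_eq_zero B he hh
    · exact fun u v u' v' => dotProduct_submatrix_mulVec_eq B hM he

/-- Let `π'` (on `𝒜 ∖ {B}`) be a simple reduction of `π` (on `𝒜`). Then
`g(π) ∈ {g(π'), g(π') + 1}`, and the following are equivalent: (1) `g(π) = g(π')`;
(2) `H(π)` is spanned by `{Ω(π)·e_x : x ≠ B}`; (3) `e_B ∉ H(π)`; (4) `e_B` is not in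
the span of `{Ω(π)·e_x : x ≠ B}`; (5) the coordinate projection `P` restricts to a
symplectic isomorphism `(H(π), ω_π) → (H(π'), ω_{π'})`. -/
theorem stmt17 {A : Type*} [Fintype A] [DecidableEq A] (B : A)
    (hd : 3 ≤ Fintype.card A)
    (π₀ π₁ : A ≃ Fin (Fintype.card A))
    (π₀' π₁' : {a : A // a ≠ B} ≃ Fin (Fintype.card A - 1))
    (hirr : Irred π₀ π₁) (hirr' : Irred π₀' π₁')
    -- `π'` is obtained from `π` by deleting the letter `B` from both rows
    (hrel₀ : ∀ u v : {a : A // a ≠ B}, π₀' u < π₀' v ↔ π₀ u.val < π₀ v.val)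
    (hrel₁ : ∀ u v : {a : A // a ≠ B}, π₁' u < π₁' v ↔ π₁ u.val < π₁ v.val) :
    -- `g(π) = g(π')` or `g(π) = g(π') + 1`:
    (finrank ℝ (Hspace π₀ π₁) = finrank ℝ (Hspace π₀' π₁') ∨
     finrank ℝ (Hspace π₀ π₁) = finrank ℝ (Hspace π₀' π₁') + 2) ∧
    -- (1) ↔ (2)
    ((finrank ℝ (Hspace π₀ π₁) = finrank ℝ (Hspace π₀' π₁')) ↔
      Hspace π₀ π₁ = Submodule.span ℝ
        {w : A → ℝ | ∃ x : A, x ≠ B ∧ w = (OmegaMat π₀ π₁) *ᵥ Pi.single x 1}) ∧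
    -- (1) ↔ (3)
    ((finrank ℝ (Hspace π₀ π₁) = finrank ℝ (Hspace π₀' π₁')) ↔
      Pi.single B (1 : ℝ) ∉ Hspace π₀ π₁) ∧
    -- (1) ↔ (4)
    ((finrank ℝ (Hspace π₀ π₁) = finrank ℝ (Hspace π₀' π₁')) ↔
      Pi.single B (1 : ℝ) ∉ Submodule.span ℝ
        {w : A → ℝ | ∃ x : A, x ≠ B ∧ w = (OmegaMat π₀ π₁) *ᵥ Pi.single x 1}) ∧
    -- (1) ↔ (5)
    ((finrank ℝ (Hspace π₀ π₁) = finrank ℝ (Hspace π₀' π₁')) ↔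
      (Submodule.map (LinearMap.funLeft ℝ ℝ (Subtype.val : {a : A // a ≠ B} → A))
          (Hspace π₀ π₁) = Hspace π₀' π₁' ∧
       (∀ h ∈ Hspace π₀ π₁,
          LinearMap.funLeft ℝ ℝ (Subtype.val : {a : A // a ≠ B} → A) h = 0 → h = 0) ∧
       (∀ (u v : A → ℝ) (u' v' : {a : A // a ≠ B} → ℝ),
          (OmegaMat π₀' π₁') *ᵥ u' =
            LinearMap.funLeft ℝ ℝ (Subtype.val : {a : A // a ≠ B} → A)
              ((OmegaMat π₀ π₁) *ᵥ u) →
          (OmegaMat π₀' π₁') *ᵥ v' =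
            LinearMap.funLeft ℝ ℝ (Subtype.val : {a : A // a ≠ B} → A)
              ((OmegaMat π₀ π₁) *ᵥ v) →
          u' ⬝ᵥ ((OmegaMat π₀' π₁') *ᵥ v') = u ⬝ᵥ ((OmegaMat π₀ π₁) *ᵥ v)))) :=
  stmt17_general B π₀ π₁ π₀' π₁' hrel₀ hrel₁
end

section
/- Let π be a degenerate standard permutation pair on an alphabet 𝒜 with d ≥ 3 letters: π is standard (the first letter of the top is the last of the bottom and vice versa) and there is a letter B which is second in both the top and bottom rows (or second to last in both). Then e_B ∉ H(π), where H(π) = Ω(π) · ℝ^𝒜. -/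
open Matrix Module

/-- If `π` is a degenerate standard permutation pair on `d ≥ 3` letters — standard with
first/last letters `a` (first of top, last of bottom) and `e` (first of bottom, last of
top), and `b` in the second position of both rows — then `e_b ∉ H(π) = Ω(π)·ℝ^𝒜`. -/
theorem stmt18 {A : Type*} [Fintype A] [DecidableEq A]
    (hd : 3 ≤ Fintype.card A)
    (π₀ π₁ : A ≃ Fin (Fintype.card A)) (a e b : A)
    -- `π` is standard:
    (ha0 : (π₀ a : ℕ) = 0) (ha1 : (π₁ a : ℕ) = Fintype.card A - 1)
    (he1 : (π₁ e : ℕ) = 0) (he0 : (π₀ e : ℕ) = Fintype.card A - 1)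
    -- `b` is the second letter of both the top and the bottom row:
    (hb0 : (π₀ b : ℕ) = 1) (hb1 : (π₁ b : ℕ) = 1) :
    Pi.single b (1 : ℝ) ∉ LinearMap.range (OmegaMat π₀ π₁).mulVecLin := by
  rintro ⟨w, hw⟩
  rw [Matrix.mulVecLin_apply] at hw
  -- column sums of Ω against the kernel vector e_a - e_b + e_e vanish
  have h1 : ∀ i, OmegaMat π₀ π₁ a i - OmegaMat π₀ π₁ b i + OmegaMat π₀ π₁ e i = 0 := by
    intro i
    have hlt0 : (π₀ i : ℕ) < Fintype.card A := (π₀ i).isLt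
    have hlt1 : (π₁ i : ℕ) < Fintype.card A := (π₁ i).isLt
    by_cases hia : i = a
    · subst hia
      simp only [OmegaMat, Matrix.of_apply]
      split_ifs <;> first | (exfalso; omega) | norm_num
    · by_cases hie : i = e
      · subst hie
        simp only [OmegaMat, Matrix.of_apply]
        split_ifs <;> first | (exfalso; omega) | norm_num
      · have h0 : (π₀ i : ℕ) ≠ 0 := fun h =>
          hia (π₀.injective (Fin.ext (h.trans ha0.symm)))
        have h1' : (π₁ i : ℕ) ≠ 0 := fun h =>
          hie (π₁.injective (Fin.ext (h.trans he1.symm)))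
        have h2 : (π₀ i : ℕ) ≠ Fintype.card A - 1 := fun h =>
          hie (π₀.injective (Fin.ext (h.trans he0.symm)))
        have h3 : (π₁ i : ℕ) ≠ Fintype.card A - 1 := fun h =>
          hia (π₁.injective (Fin.ext (h.trans ha1.symm)))
        simp only [OmegaMat, Matrix.of_apply]
        split_ifs <;> first | (exfalso; omega) | norm_num
  have h2 : ((OmegaMat π₀ π₁).mulVec w) a - ((OmegaMat π₀ π₁).mulVec w) b
      + ((OmegaMat π₀ π₁).mulVec w) e = 0 := by
    simp only [Matrix.mulVec, dotProduct]
    rw [← Finset.sum_sub_distrib, ← Finset.sum_add_distrib]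
    apply Finset.sum_eq_zero
    intro i _
    have := h1 i
    linear_combination (h1 i) * w i
  rw [hw] at h2
  have hab : a ≠ b := fun h => by rw [h, hb0] at ha0; omega
  have heb : e ≠ b := fun h => by rw [h, hb1] at he1; omega
  rw [Pi.single_eq_of_ne hab, Pi.single_eq_of_ne heb, Pi.single_eq_same] at h2
  norm_num at h2
end

section
/- Simple extensions are irreducible: let π' be an irreducible permutation pair on alphabet 𝒜' with first top letter A and first bottom letter E, let B ∉ 𝒜', and let C, D ∈ 𝒜' with (A,E) ≠ (C,D). Define π on 𝒜 = 𝒜' ∪ {B} by inserting B immediately before C in the top row and immediately before D in the bottom row. Then π is irreducible. -/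
/-- Simple extensions are irreducible: if `π'` is irreducible on `𝒜'` with first top
letter `a` and first bottom letter `e`, and `π` on `𝒜' ∪ {B}` (modelled as `Option 𝒜'`
with `B = none`) is obtained by inserting `B` immediately before `c` in the top row
and immediately before `d` in the bottom row, where `(a,e) ≠ (c,d)`, then `π` is
irreducible. -/
theorem stmt19 {A' : Type*} [Fintype A'] [DecidableEq A']
    (π₀' π₁' : A' ≃ Fin (Fintype.card A'))
    (hirr' : Irred π₀' π₁')
    (a e c d : A')
    (ha : (π₀' a : ℕ) = 0) (he : (π₁' e : ℕ) = 0)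
    (hne : (a, e) ≠ (c, d))
    (π₀ π₁ : Option A' ≃ Fin (Fintype.card A' + 1))
    -- `B = none` is inserted immediately before `c` in the top row …
    (h0none : (π₀ none : ℕ) = (π₀' c : ℕ))
    (h0some : ∀ z : A', (π₀ (some z) : ℕ) =
      if (π₀' z : ℕ) < (π₀' c : ℕ) then (π₀' z : ℕ) else (π₀' z : ℕ) + 1)
    -- … and immediately before `d` in the bottom row
    (h1none : (π₁ none : ℕ) = (π₁' d : ℕ))
    (h1some : ∀ z : A', (π₁ (some z) : ℕ) =
      if (π₁' z : ℕ) < (π₁' d : ℕ) then (π₁' z : ℕ) else (π₁' z : ℕ) + 1) :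
    Irred π₀ π₁ := by
  intro k hk hkn hset
  have hmem : ∀ x : Option A', ((π₀ x : ℕ) < k ↔ (π₁ x : ℕ) < k) := by
    intro x
    rw [Set.ext_iff] at hset
    exact hset x
  by_cases h : (π₀' c : ℕ) < k
  · -- none is in both sets
    have hd : (π₁' d : ℕ) < k := by
      have := (hmem none).mp (by rw [h0none]; exact h)
      rwa [h1none] at this
    rcases Nat.lt_or_ge 1 k with hk1 | hk1
    · -- k ≥ 2 : apply irreducibility at k - 1
      have hklt : k - 1 < Fintype.card A' := by omega
      refine hirr' (k - 1) (by omega) hklt ?_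
      ext z
      have hz := hmem (some z)
      rw [h0some, h1some] at hz
      simp only [Set.mem_setOf_eq]
      split_ifs at hz <;> omega
    · -- k = 1 : then c = a and d = e, contradicting hne
      have hc0 : (π₀' c : ℕ) = 0 := by omega
      have hd0 : (π₁' d : ℕ) = 0 := by omega
      have hca : c = a := π₀'.injective (Fin.ext (by omega))
      have hde : d = e := π₁'.injective (Fin.ext (by omega))
      exact hne (by rw [hca, hde])
  · -- none is in neither set
    have hd : ¬ (π₁' d : ℕ) < k := by
      intro hh
      have := (hmem none).mpr (by rw [h1none]; exact hh)
      rw [h0none] at this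
      exact h this
    have hcn : (π₀' c : ℕ) < Fintype.card A' := (π₀' c).isLt
    refine hirr' k hk (by omega) ?_
    ext z
    have hz := hmem (some z)
    rw [h0some, h1some] at hz
    simp only [Set.mem_setOf_eq]
    split_ifs at hz <;> omega
end
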